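/- arXiv:math/0303206 — 16 statements merged into one kernel-verified Lean document; each statement's English description precedes it below -/
import Mathlib

section
/- Let k be an uncountable algebraically closed field and S = k[z_1, z_2, ...] the polynomial ring in countably many variables. If M is a maximal ideal of S, then the zero set V(M) in k^ℕ is nonempty. -/
open MvPolynomial
set_option maxHeartbeats 1000000 in

/-- If `k` is an uncountable algebraically closed field and `M` is a maximal ideal of
`k[z_1, z_2, ...]` (countably many variables), then the zero set `V(M)` in `k^ℕ` is nonempty. -/
theorem maximal_ideal_has_zero {k : Type*} [Field k] [IsAlgClosed k] [Uncountable k]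
    (M : Ideal (MvPolynomial ℕ k)) (hM : M.IsMaximal) :
    ∃ a : ℕ → k, ∀ f ∈ M, eval a f = 0 := by
  classical
  set S := MvPolynomial ℕ k
  let K := S ⧸ M
  haveI := hM
  -- rank of K over k is at most ℵ₀
  have hrank : Module.rank k K ≤ Cardinal.aleph0 := by
    have hsurj : Function.Surjective (Ideal.Quotient.mkₐ k M) := Ideal.Quotient.mkₐ_surjective k M
    have := LinearMap.rank_le_of_surjective (Ideal.Quotient.mkₐ k M).toLinearMap hsurj
    refine this.trans ?_
    rw [MvPolynomial.rank_eq_lift]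
    simp [Cardinal.mk_finsupp_nat]
  letI : Field K := Ideal.Quotient.field M
  -- every element of K is integral over k
  haveI : Algebra.IsIntegral k K := by
    constructor
    intro x
    by_contra hx
    have hx' : Transcendental k x := fun h => hx (isAlgebraic_iff_isIntegral.mp h)
    have h := hx'.linearIndependent_sub_inv.cardinal_lift_le_rank
    have hk : Cardinal.aleph0 < Cardinal.mk k := Cardinal.aleph0_lt_mk (α := k)
    rw [Cardinal.lift_le] at h
    exact absurd (h.trans hrank) (not_le.mpr hk)
  -- so algebraMap k K is bijective
  have hbij : Function.Bijective (algebraMap k K) :=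
    ⟨(algebraMap k K).injective, IsAlgClosed.algebraMap_bijective_of_isIntegral.2⟩
  let e : k ≃+* K := RingEquiv.ofBijective (algebraMap k K) hbij
  let ψ : S →+* k := (e.symm : K →+* k).comp (Ideal.Quotient.mk M)
  refine ⟨fun i => ψ (X i), fun f hf => ?_⟩
  have heq : eval (fun i => ψ (X i)) = ψ := by
    apply MvPolynomial.ringHom_ext
    · intro r
      rw [eval_C]
      show r = e.symm (Ideal.Quotient.mk M (C r))
      have h1 : Ideal.Quotient.mk M (C r) = e r := by
        have := Ideal.Quotient.mk_algebraMap (R₁ := k) M r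
        rw [MvPolynomial.algebraMap_eq] at this
        exact this
      rw [h1, RingEquiv.symm_apply_apply]
    · intro i
      rw [eval_X]
  rw [heq]
  show e.symm (Ideal.Quotient.mk M f) = 0
  rw [Ideal.Quotient.eq_zero_iff_mem.mpr hf, map_zero]
end

section
/- Let k be an uncountable algebraically closed field and S = k[z_1, z_2, ...] the polynomial ring in countably many variables. An ideal M of S is maximal if and only if M is generated by {z_i − a_i : i ∈ ℕ} for some point (a_i) ∈ k^ℕ. -/
/-!
A maximal ideal `M` has residue field `L = k[X_i] ⧸ M` of countable dimension over `k`. A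
transcendental `x ∈ L` would give the uncountable `k`-linearly independent family
`(x - c)⁻¹`, `c ∈ k`, so `L` is algebraic over `k`, hence equal to `k` since `k` is algebraically
closed. Sending each `X_i` to its residue then gives a point `a` with `M` the vanishing ideal of
`a`, which is generated by the `X_i - a_i`.
-/

open MvPolynomial

universe u v

theorem Algebra.IsAlgebraic.of_lift_rank_lt_lift_cardinalMk {F : Type u} {E : Type v}
    [Field F] [Field E] [Algebra F E]
    (h : Cardinal.lift.{u} (Module.rank F E) < Cardinal.lift.{v} (Cardinal.mk F)) :
    Algebra.IsAlgebraic F E := by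
  refine ⟨fun x => not_not.1 fun hx => h.not_ge ?_⟩
  exact (Transcendental.linearIndependent_sub_inv hx).cardinal_lift_le_rank

namespace MvPolynomial

theorem rank_le_aleph0 (σ R : Type*) [CommRing R] [Nontrivial R] [Countable σ] :
    Module.rank R (MvPolynomial σ R) ≤ Cardinal.aleph0 := by
  rw [rank_eq_lift, Cardinal.lift_le_aleph0]
  exact Cardinal.mk_le_aleph0

theorem sub_C_eval_mem_span_X_sub_C {σ R : Type*} [CommRing R] (a : σ → R)
    (p : MvPolynomial σ R) :
    p - C (eval a p) ∈ Ideal.span (Set.range fun i => X i - C (a i)) := by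
  rw [← Ideal.Quotient.eq]
  induction p using MvPolynomial.induction_on with
  | C c => simp
  | add p q hp hq => simp only [map_add, hp, hq]
  | mul_X p i hp =>
    have hX : Ideal.Quotient.mk (Ideal.span (Set.range fun i => X i - C (a i))) (X i) =
        Ideal.Quotient.mk _ (C (a i)) :=
      Ideal.Quotient.eq.2 (Ideal.subset_span ⟨i, rfl⟩)
    rw [map_mul, hp, hX, ← map_mul, ← C_mul, eval_mul, eval_X]

theorem span_X_sub_C_eq_vanishingIdeal {σ k : Type*} [Field k] (a : σ → k) :
    Ideal.span (Set.range fun i => X i - C (a i)) = vanishingIdeal k {a} := by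
  refine le_antisymm (Ideal.span_le.2 ?_) fun p hp => ?_
  · rintro _ ⟨i, rfl⟩
    simp
  · have hpa : eval a p = 0 := by
      simpa [coe_aeval_eq_eval] using (mem_vanishingIdeal_singleton_iff a p).1 hp
    simpa [hpa] using sub_C_eval_mem_span_X_sub_C a p

theorem eq_vanishingIdeal_singleton_of_isMaximal_of_countable {σ K : Type*} [Countable σ]
    [Field K] [IsAlgClosed K] [Uncountable K] {I : Ideal (MvPolynomial σ K)} (hI : I.IsMaximal) :
    ∃ x : σ → K, I = vanishingIdeal K {x} := by
  let : Field (MvPolynomial σ K ⧸ I) := Ideal.Quotient.field I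
  have hrank : Module.rank K (MvPolynomial σ K ⧸ I) ≤ Cardinal.aleph0 :=
    ((Ideal.Quotient.mkₐ K I).toLinearMap.rank_le_of_surjective
      Ideal.Quotient.mk_surjective).trans (rank_le_aleph0 σ K)
  have : Algebra.IsAlgebraic K (MvPolynomial σ K ⧸ I) :=
    .of_lift_rank_lt_lift_cardinalMk ((Cardinal.lift_le_aleph0.2 hrank).trans_lt
      (Cardinal.aleph0_lt_lift.2 Cardinal.aleph0_lt_mk))
  have : Module.IsTorsionFree K (MvPolynomial σ K ⧸ I) := inferInstance
  let φ : (MvPolynomial σ K ⧸ I) →ₐ[K] K := IsAlgClosed.lift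
  let x : σ → K := fun s => φ (Ideal.Quotient.mk I (X s))
  have : aeval x = φ.comp (Ideal.Quotient.mkₐ K I) := by ext; simp [x]
  refine ⟨x, Ideal.ext fun p => ?_⟩
  rw [mem_vanishingIdeal_singleton_iff, this]
  simp [Ideal.Quotient.eq_zero_iff_mem]

theorem isMaximal_iff_eq_vanishingIdeal_singleton_of_countable {σ K : Type*} [Countable σ]
    [Field K] [IsAlgClosed K] [Uncountable K] {I : Ideal (MvPolynomial σ K)} :
    I.IsMaximal ↔ ∃ x : σ → K, I = vanishingIdeal K {x} :=
  ⟨eq_vanishingIdeal_singleton_of_isMaximal_of_countable, fun ⟨_, hx⟩ => hx ▸ inferInstance⟩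

end MvPolynomial

/-- For an uncountable algebraically closed field `k`, an ideal `M` of `k[z_1, z_2, ...]`
is maximal iff it is generated by `{z_i - a_i : i ∈ ℕ}` for some point `a ∈ k^ℕ`. -/
theorem maximal_iff_span_sub_const {k : Type*} [Field k] [IsAlgClosed k] [Uncountable k]
    (M : Ideal (MvPolynomial ℕ k)) :
    M.IsMaximal ↔ ∃ a : ℕ → k, M = Ideal.span (Set.range fun i : ℕ => X i - C (a i)) := by
  simp only [span_X_sub_C_eq_vanishingIdeal, isMaximal_iff_eq_vanishingIdeal_singleton_of_countable]
end

section
/- Let k be an uncountable algebraically closed field and S = k[z_1, z_2, ...] the polynomial ring in countably many variables. Every proper ideal of S has a nonempty zero set in k^ℕ (weak Nullstellensatz). -/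
open MvPolynomial

set_option maxHeartbeats 1000000 in
/-- Weak Nullstellensatz in countably many variables over an uncountable algebraically
closed field: every proper ideal of `k[z_1, z_2, ...]` has a nonempty zero set in `k^ℕ`. -/
theorem proper_ideal_has_zero {k : Type*} [Field k] [IsAlgClosed k] [Uncountable k]
    (J : Ideal (MvPolynomial ℕ k)) (hJ : J ≠ ⊤) :
    ∃ a : ℕ → k, ∀ f ∈ J, eval a f = 0 := by
  obtain ⟨m, hm, hJm⟩ := J.exists_le_maximal hJ
  haveI := hm
  letI F : Field (MvPolynomial ℕ k ⧸ m) := Ideal.Quotient.field m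
  letI : Algebra k (MvPolynomial ℕ k ⧸ m) :=
    RingHom.toAlgebra ((Ideal.Quotient.mk m).comp (MvPolynomial.C))
  letI : Module k (MvPolynomial ℕ k ⧸ m) := Algebra.toModule
  -- the quotient map as a `k`-algebra hom
  let ψ : MvPolynomial ℕ k →ₐ[k] (MvPolynomial ℕ k ⧸ m) :=
    { toRingHom := Ideal.Quotient.mk m
      commutes' := fun c => rfl }
  have hψ : Function.Surjective ψ := Ideal.Quotient.mk_surjective
  -- rank bound
  have hrankS : Module.rank k (MvPolynomial ℕ k) ≤ Cardinal.aleph0 := by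
    have h := (MvPolynomial.basisMonomials ℕ k).mk_eq_rank
    rw [← Cardinal.lift_le_aleph0, ← h]
    simp [Cardinal.mk_le_aleph0]
  have hrankK : Module.rank k (MvPolynomial ℕ k ⧸ m) ≤ Cardinal.aleph0 :=
    le_trans (LinearMap.rank_le_of_surjective ψ.toLinearMap hψ) hrankS
  -- every element of the quotient is algebraic over k
  have halg : ∀ x : MvPolynomial ℕ k ⧸ m, IsAlgebraic k x := by
    intro x
    by_contra hx
    have htr : Transcendental k x := hx
    have hli := htr.linearIndependent_sub_inv
    have h1 := hli.cardinal_le_rank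
    have hk : (Cardinal.mk k) ≤ Cardinal.aleph0 := le_trans h1 hrankK
    exact absurd (Cardinal.mk_le_aleph0_iff.mp hk) (not_countable_iff.mpr ‹Uncountable k›)
  haveI : Algebra.IsIntegral k (MvPolynomial ℕ k ⧸ m) :=
    Algebra.isIntegral_def.mpr fun x => (halg x).isIntegral
  have hAsurj : Function.Surjective (algebraMap k (MvPolynomial ℕ k ⧸ m)) :=
    IsAlgClosed.algebraMap_bijective_of_isIntegral.2
  have hAinj : Function.Injective (algebraMap k (MvPolynomial ℕ k ⧸ m)) :=
    (algebraMap k (MvPolynomial ℕ k ⧸ m)).injective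
  let e : k ≃+* (MvPolynomial ℕ k ⧸ m) :=
    RingEquiv.ofBijective (algebraMap k (MvPolynomial ℕ k ⧸ m)) ⟨hAinj, hAsurj⟩
  -- build the k-algebra hom S → k
  let φ : MvPolynomial ℕ k →ₐ[k] k :=
    { toRingHom := e.symm.toRingHom.comp (Ideal.Quotient.mk m)
      commutes' := fun c => by
        have : (Ideal.Quotient.mk m) (algebraMap k (MvPolynomial ℕ k) c) = e c := rfl
        show e.symm ((Ideal.Quotient.mk m) (algebraMap k (MvPolynomial ℕ k) c)) = c
        rw [this, RingEquiv.symm_apply_apply] }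
  refine ⟨fun i => φ (X i), fun f hf => ?_⟩
  have hφ : φ = aeval (φ ∘ X) := aeval_unique φ
  have heval : eval (fun i => φ (X i)) f = φ f := by
    conv_rhs => rw [hφ]
    rw [aeval_def, ← MvPolynomial.eval_map]
    congr 1
    simp [MvPolynomial.map_id]
  rw [heval]
  show e.symm ((Ideal.Quotient.mk m) f) = 0
  rw [Ideal.Quotient.eq_zero_iff_mem.mpr (hJm hf), map_zero]
end

section
/- Let k be an uncountable algebraically closed field and S = k[z_1, z_2, ...]. For every ideal J of S, the ideal of polynomials vanishing on V(J) equals the radical of J (strong Nullstellensatz). -/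
/-!
A $k$-algebra generated by countably many elements has countable $k$-dimension. Since $k$ is
uncountable, a field of countable dimension over $k$ is algebraic over $k$ (a transcendental $x$
would make the uncountable family $1/(x - c)$, $c ∈ k$, linearly independent), hence equals $k$.
So every maximal ideal of such an algebra has residue field $k$. If $f ∉ \sqrt{J}$, the
localization $(S/J)_f$ is nonzero and countably generated; a maximal ideal of it gives a point
of $V(J)$ at which $f$ does not vanish.
-/

open Cardinal MvPolynomial

theorem rank_le_aleph0_of_surjective {k A σ : Type*} [CommRing k] [Nontrivial k] [CommRing A]
    [Algebra k A] [Countable σ] (φ : MvPolynomial σ k →ₐ[k] A)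
    (hφ : Function.Surjective φ) :
    Module.rank k A ≤ ℵ₀ := by
  have h := φ.toLinearMap.lift_rank_le_of_surjective hφ
  rw [rank_eq_lift, lift_lift] at h
  exact lift_le_aleph0.1 (h.trans (lift_le_aleph0.2 mk_le_aleph0))

theorem exists_surjective_aeval_localizationAway {k R σ : Type*} [CommSemiring k] [CommRing R]
    [Algebra k R] (φ : MvPolynomial σ k →ₐ[k] R) (hφ : Function.Surjective φ) (x : R) :
    ∃ ψ : MvPolynomial (Option σ) k →ₐ[k] Localization.Away x, Function.Surjective ψ := by
  let ι := IsScalarTower.toAlgHom k R (Localization.Away x)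
  let ψ : MvPolynomial (Option σ) k →ₐ[k] Localization.Away x :=
    aeval fun o => o.elim (IsLocalization.Away.invSelf x) (ι ∘ φ ∘ X)
  have hψ : ∀ g, ψ (rename some g) = ι (φ g) := fun g => by
    rw [aeval_rename, ← AlgHom.comp_apply ι φ, aeval_unique (ι.comp φ)]; rfl
  refine ⟨ψ, fun z => ?_⟩
  obtain ⟨n, a, hz⟩ := IsLocalization.Away.surj x z
  obtain ⟨g, rfl⟩ := hφ a
  refine ⟨rename some g * X none ^ n, ?_⟩
  rw [map_mul, map_pow, hψ, aeval_X, IsScalarTower.coe_toAlgHom', ← hz, mul_assoc, ← mul_pow,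
    Option.elim_none, IsLocalization.Away.mul_invSelf, one_pow, mul_one]

section UncountableAlgClosed

variable {k : Type*} [Field k] [IsAlgClosed k] [Uncountable k]

theorem algebraMap_surjective_of_rank_le_aleph0 {K : Type*} [Field K] [Algebra k K]
    (hK : Module.rank k K ≤ ℵ₀) : Function.Surjective (algebraMap k K) := by
  have : Algebra.IsAlgebraic k K := ⟨fun x => by
    by_contra hx
    have h := (Transcendental.linearIndependent_sub_inv hx).cardinal_lift_le_rank
    exact (aleph0_lt_mk (α := k)).not_ge (lift_le_aleph0.1 (h.trans (lift_le_aleph0.2 hK)))⟩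
  exact IsAlgClosed.algebraMap_bijective_of_isIntegral.2

theorem nonempty_algHom_of_rank_le_aleph0 {A : Type*} [CommRing A] [Nontrivial A] [Algebra k A]
    (hA : Module.rank k A ≤ ℵ₀) : Nonempty (A →ₐ[k] k) := by
  obtain ⟨m, _⟩ := Ideal.exists_maximal A
  let _ : Field (A ⧸ m) := Ideal.Quotient.field m
  have hK : Module.rank k (A ⧸ m) ≤ ℵ₀ :=
    ((Ideal.Quotient.mkₐ k m).toLinearMap.rank_le_of_surjective
      Ideal.Quotient.mk_surjective).trans hA
  let e : k ≃ₐ[k] A ⧸ m := AlgEquiv.ofBijective (Algebra.ofId k (A ⧸ m))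
    ⟨(algebraMap k (A ⧸ m)).injective, algebraMap_surjective_of_rank_le_aleph0 hK⟩
  exact ⟨e.symm.toAlgHom.comp (Ideal.Quotient.mkₐ k m)⟩

theorem exists_eval_ne_zero_of_notMem_radical {σ : Type*} [Countable σ]
    {J : Ideal (MvPolynomial σ k)} {f : MvPolynomial σ k} (hf : f ∉ J.radical) :
    ∃ a : σ → k, (∀ g ∈ J, eval a g = 0) ∧ eval a f ≠ 0 := by
  let B := Localization.Away (Ideal.Quotient.mk J f)
  have : Nontrivial B := by
    rw [← not_subsingleton_iff_nontrivial,
      IsLocalization.subsingleton_iff (M := Submonoid.powers (Ideal.Quotient.mk J f))]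
    rintro ⟨n, hn⟩
    exact hf ⟨n, Ideal.Quotient.eq_zero_iff_mem.1 (by simpa using hn)⟩
  obtain ⟨φ, hφ⟩ := exists_surjective_aeval_localizationAway (Ideal.Quotient.mkₐ k J)
    Ideal.Quotient.mk_surjective (Ideal.Quotient.mk J f)
  obtain ⟨ψ⟩ := nonempty_algHom_of_rank_le_aleph0 (rank_le_aleph0_of_surjective φ hφ)
  let χ := (ψ.comp (IsScalarTower.toAlgHom k _ B)).comp (Ideal.Quotient.mkₐ k J)
  have hχ : ∀ g, eval (χ ∘ X) g = χ g := fun g => by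
    rw [← coe_aeval_eq_eval, ← aeval_unique]; rfl
  refine ⟨χ ∘ X, fun g hg => ?_, ?_⟩
  · rw [hχ]
    simp [χ, Ideal.Quotient.eq_zero_iff_mem.2 hg]
  · rw [hχ]
    exact ((IsLocalization.Away.algebraMap_isUnit (S := B) (Ideal.Quotient.mk J f)).map ψ).ne_zero

end UncountableAlgClosed

/-- Strong Nullstellensatz in countably many variables over an uncountable algebraically
closed field: for every ideal `J` of `k[z_1, z_2, ...]`, `I(V(J)) = √J`. -/
theorem vanishing_ideal_eq_radical {k : Type*} [Field k] [IsAlgClosed k] [Uncountable k]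
    (J : Ideal (MvPolynomial ℕ k)) :
    ∀ f : MvPolynomial ℕ k,
      (∀ a : ℕ → k, (∀ g ∈ J, eval a g = 0) → eval a f = 0) ↔ f ∈ J.radical := by
  intro f
  constructor
  · intro hV
    by_contra hf
    obtain ⟨a, hJ, hfa⟩ := exists_eval_ne_zero_of_notMem_radical hf
    exact hfa (hV a hJ)
  · rintro ⟨n, hn⟩ a hJ
    exact eq_zero_of_pow_eq_zero ((map_pow (eval a) f n).symm.trans (hJ _ hn))
end

section
/- The affine space k^ℕ over an uncountable algebraically closed field k is not the union of countably many proper Zariski-closed subsets. Precisely: if (f_i)_{i∈ℕ} is a sequence of nonzero polynomials in k[z_1, z_2, ...], then there exists a point a ∈ k^ℕ with f_i(a) ≠ 0 for all i. -/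
/-!
All coefficients of all the `f i` lie in a countable subring `R` of `k`. Since `k` is uncountable
while everything algebraic over a countable ring is countable, a transcendence basis of `k` over
`R` is uncountable; any sequence `a` of distinct elements of it is algebraically independent
over `R`, so no nonzero polynomial with coefficients in `R`, in particular no `f i`, vanishes
at `a`.
-/

open MvPolynomial Cardinal

universe u v w

theorem Algebra.countable_adjoin {R : Type u} {A : Type v} [CommSemiring R] [Semiring A]
    [Algebra R A] [Countable R] {s : Set A} (hs : s.Countable) :
    Countable (Algebra.adjoin R s) := by
  have := hs.to_subtype
  rw [← mk_le_aleph0_iff, ← lift_le_aleph0.{v, u}]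
  exact (lift_cardinalMk_adjoin_le R s).trans (by simp)

theorem IsTranscendenceBasis.uncountable {R : Type u} {A : Type v} {ι : Type w} [CommRing R]
    [Nontrivial R] [CommRing A] [IsDomain A] [Algebra R A] [Countable R] [Uncountable A]
    {x : ι → A} (hx : IsTranscendenceBasis R x) : Uncountable ι := by
  by_contra hι
  rw [not_uncountable_iff] at hι
  have hA : Algebra.IsAlgebraic (Algebra.adjoin R (Set.range x)) A := hx.isAlgebraic
  have hadjoin := Algebra.countable_adjoin (R := R) (Set.countable_range x)
  have hcard := Algebra.IsAlgebraic.cardinalMk_le_max (Algebra.adjoin R (Set.range x)) A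
  exact (aleph0_lt_mk (α := A)).not_ge (hcard.trans (max_le mk_le_aleph0 le_rfl))

theorem exists_algebraicIndependent_nat_of_countable (R : Type u) (A : Type v) [CommRing R]
    [Nontrivial R] [CommRing A] [IsDomain A] [Algebra R A] [FaithfulSMul R A] [Countable R]
    [Uncountable A] : ∃ x : ℕ → A, AlgebraicIndependent R x := by
  obtain ⟨s, hs⟩ := exists_isTranscendenceBasis R A
  have := hs.uncountable
  exact ⟨_, hs.1.comp _ (Infinite.natEmbedding s).injective⟩

theorem AlgebraicIndependent.eval_ne_zero {R : Type u} {A : Type v} {ι : Type w} [CommRing R]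
    [CommRing A] [Algebra R A] {x : ι → A} (hx : AlgebraicIndependent R x)
    {p : MvPolynomial ι A} (hp : (p.coeffs : Set A) ⊆ Set.range (algebraMap R A))
    (hp0 : p ≠ 0) : eval x p ≠ 0 := by
  obtain ⟨q, rfl⟩ := mem_range_map_iff_coeffs_subset.mpr hp
  rw [eval_map, ← aeval_def]
  exact fun h => hp0 (by rw [hx.eq_zero_of_aeval_eq_zero q h, map_zero])

theorem exists_common_nonvanishing_point_general {k : Type*} [Field k] [Uncountable k]
    (f : ℕ → MvPolynomial ℕ k) (hf : ∀ i, f i ≠ 0) :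
    ∃ a : ℕ → k, ∀ i, eval a (f i) ≠ 0 := by
  let R := Algebra.adjoin ℤ (⋃ i, ((f i).coeffs : Set k))
  have : Countable R :=
    Algebra.countable_adjoin (Set.countable_iUnion fun i => (f i).coeffs.countable_toSet)
  obtain ⟨a, ha⟩ := exists_algebraicIndependent_nat_of_countable R k
  refine ⟨a, fun i => ha.eval_ne_zero (fun c hc => ?_) (hf i)⟩
  exact ⟨⟨c, Algebra.subset_adjoin (Set.mem_iUnion_of_mem i hc)⟩, rfl⟩

/-- `k^ℕ` over an uncountable algebraically closed field is not a union of countably many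
proper Zariski-closed subsets: given nonzero polynomials `f i ∈ k[z_1, z_2, ...]` for
`i ∈ ℕ`, there is a point where none of them vanishes. -/
theorem exists_common_nonvanishing_point {k : Type*} [Field k] [IsAlgClosed k] [Uncountable k]
    (f : ℕ → MvPolynomial ℕ k) (hf : ∀ i, f i ≠ 0) :
    ∃ a : ℕ → k, ∀ i, eval a (f i) ≠ 0 :=
  exists_common_nonvanishing_point_general f hf
end

section
/- Affine n-space k^n over an uncountable algebraically closed field k (for finite n) is not a countable union of proper algebraic subsets: given countably many nonzero polynomials f_i ∈ k[z_1,...,z_n], there is a common non-vanishing point. -/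
/-!
Induct on the number of variables. Viewing each `f i` as a polynomial in the first variable over
the remaining ones, choose the remaining coordinates so that no leading coefficient vanishes; the
specialized one-variable polynomials are then nonzero and have countably many roots altogether,
which cannot exhaust an uncountable ring.
-/

open MvPolynomial

theorem Polynomial.exists_forall_eval_ne_zero_of_countable {R ι : Type*} [CommRing R]
    [IsDomain R] [Uncountable R] [Countable ι] (p : ι → Polynomial R) (hp : ∀ i, p i ≠ 0) :
    ∃ x, ∀ i, (p i).eval x ≠ 0 := by
  have hroots : (⋃ i, {x | (p i).IsRoot x}).Countable :=
    Set.countable_iUnion fun i => (finite_setOfPred_isRoot (hp i)).countable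
  by_contra! h
  exact Set.not_countable_univ (hroots.mono fun x _ => Set.mem_iUnion.2 (h x))

theorem MvPolynomial.exists_forall_eval_ne_zero_of_countable {R ι : Type*} [CommRing R]
    [IsDomain R] [Uncountable R] [Countable ι] {n : ℕ} (f : ι → MvPolynomial (Fin n) R)
    (hf : ∀ i, f i ≠ 0) : ∃ x : Fin n → R, ∀ i, eval x (f i) ≠ 0 := by
  induction n with
  | zero =>
    refine ⟨Fin.elim0, fun i => ?_⟩
    rw [(f i).eq_C_of_isEmpty, eval_C]
    exact fun h => hf i (by rw [(f i).eq_C_of_isEmpty, h, C_0])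
  | succ n ih =>
    have hsucc_ne : ∀ i, finSuccEquiv R n (f i) ≠ 0 := fun i => by
      rw [Ne, EmbeddingLike.map_eq_zero_iff]; exact hf i
    obtain ⟨x, hx⟩ := ih (fun i => (finSuccEquiv R n (f i)).leadingCoeff)
      (fun i => Polynomial.leadingCoeff_ne_zero.mpr (hsucc_ne i))
    have hspec_ne : ∀ i, (finSuccEquiv R n (f i)).map (eval x) ≠ 0 := fun i h =>
      hx i (by rw [Polynomial.leadingCoeff, ← Polynomial.coeff_map, h, Polynomial.coeff_zero])
    obtain ⟨y, hy⟩ := Polynomial.exists_forall_eval_ne_zero_of_countable _ hspec_ne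
    exact ⟨Fin.cons y x, fun i => by rw [eval_eq_eval_mv_eval']; exact hy i⟩

theorem exists_common_nonvanishing_point_fin_general {k : Type*} [Field k]
    [Uncountable k] {n : ℕ} (f : ℕ → MvPolynomial (Fin n) k) (hf : ∀ i, f i ≠ 0) :
    ∃ a : Fin n → k, ∀ i, eval a (f i) ≠ 0 :=
  MvPolynomial.exists_forall_eval_ne_zero_of_countable f hf

/-- Affine `n`-space over an uncountable algebraically closed field is not a countable
union of proper algebraic subsets: countably many nonzero polynomials in
`k[z_1, ..., z_n]` have a common non-vanishing point. -/
theorem exists_common_nonvanishing_point_fin {k : Type*} [Field k] [IsAlgClosed k]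
    [Uncountable k] {n : ℕ} (f : ℕ → MvPolynomial (Fin n) k) (hf : ∀ i, f i ≠ 0) :
    ∃ a : Fin n → k, ∀ i, eval a (f i) ≠ 0 :=
  exists_common_nonvanishing_point_fin_general f hf
end

section
/- There exists a proper ideal J in the polynomial ring over ℂ in variables indexed by an uncountable set Λ such that V(J) = ∅; hence the weak Nullstellensatz fails for uncountably many variables. Concretely, with Λ = ℂ ⊕ {pt}, the ideal generated by {z_a(z_0 − a) − 1 : a ∈ ℂ, a ≠ 0} ∪ {z_pt · z_0 − 1} is proper and has no common zero. -/
open MvPolynomial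

/-- The generators `h_a = z_a (z_0 - a) - 1` for `a ≠ 0` and `h_pt = z_pt z_0 - 1` in the
polynomial ring over `ℂ` in variables indexed by `Λ = ℂ ⊕ Unit`. -/
noncomputable def robinsonGens : Set (MvPolynomial (ℂ ⊕ Unit) ℂ) :=
  {p | ∃ a : ℂ, a ≠ 0 ∧ p = X (Sum.inl a) * (X (Sum.inl 0) - C a) - 1} ∪
    {X (Sum.inr ()) * X (Sum.inl 0) - 1}

/-- The weak Nullstellensatz fails for uncountably many variables: the ideal generated by
`{z_a(z_0 - a) - 1 : a ∈ ℂ, a ≠ 0} ∪ {z_pt z_0 - 1}` in `ℂ[(z_λ)_{λ ∈ ℂ ⊕ Unit}]` is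
proper, yet has empty zero set. -/
theorem weak_nullstellensatz_fails_uncountable :
    Ideal.span robinsonGens ≠ ⊤ ∧
    ¬ ∃ ξ : (ℂ ⊕ Unit) → ℂ, ∀ p ∈ robinsonGens, eval ξ p = 0 := by
  classical
  constructor
  · intro htop
    have h1 : (1 : MvPolynomial (ℂ ⊕ Unit) ℂ) ∈ Ideal.span robinsonGens := by
      rw [htop]; trivial
    obtain ⟨t, hts, h1t⟩ := Submodule.mem_span_finite_of_mem_span h1
    -- the parameter extraction function
    set g : MvPolynomial (ℂ ⊕ Unit) ℂ → ℂ := fun p =>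
      if h : ∃ a : ℂ, a ≠ 0 ∧ p = X (Sum.inl a) * (X (Sum.inl 0) - C a) - 1
      then h.choose else 0 with hg
    obtain ⟨c, hc⟩ := Infinite.exists_notMem_finset (insert (0 : ℂ) (t.image g))
    have hc0 : c ≠ 0 := fun h => hc (by simp [h])
    set ξ : (ℂ ⊕ Unit) → ℂ := Sum.elim (fun a => if a = 0 then c else (c - a)⁻¹)
      (fun _ => c⁻¹) with hξ
    have hker : ∀ p ∈ t, (eval ξ) p = 0 := by
      intro p hp
      have hpg := hts hp
      rcases hpg with ⟨a, ha0, rfl⟩ | hpt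
      · have hdef : ∃ a' : ℂ, a' ≠ 0 ∧
            (X (Sum.inl a) * (X (Sum.inl 0) - C a) - 1 : MvPolynomial (ℂ ⊕ Unit) ℂ)
              = X (Sum.inl a') * (X (Sum.inl 0) - C a') - 1 := ⟨a, ha0, rfl⟩
        obtain ⟨ha'0, heq⟩ := hdef.choose_spec
        have hgp : g (X (Sum.inl a) * (X (Sum.inl 0) - C a) - 1) = hdef.choose := by
          simp only [hg, dif_pos hdef]
        have hca' : c ≠ hdef.choose := by
          intro h
          exact hc (Finset.mem_insert_of_mem (Finset.mem_image.2 ⟨_, hp, by rw [hgp, h]⟩))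
        rw [heq]
        simp only [hξ, map_sub, map_mul, map_one, eval_X, eval_C, Sum.elim_inl,
          if_neg ha'0, if_pos rfl, if_true]
        rw [inv_mul_cancel₀ (sub_ne_zero.2 hca')]
        ring
      · simp only [Set.mem_singleton_iff] at hpt
        subst hpt
        simp only [hξ, map_sub, map_mul, map_one, eval_X, Sum.elim_inl, Sum.elim_inr,
          if_pos rfl, if_true]
        rw [inv_mul_cancel₀ hc0]
        ring
    have : Ideal.span (t : Set (MvPolynomial (ℂ ⊕ Unit) ℂ)) ≤ RingHom.ker (eval ξ) := by
      rw [Ideal.span_le]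
      intro p hp
      exact hker p hp
    have := this h1t
    simp only [RingHom.mem_ker, map_one] at this
    exact one_ne_zero this
  · rintro ⟨ξ, hξ⟩
    by_cases h0 : ξ (Sum.inl 0) = 0
    · have := hξ (X (Sum.inr ()) * X (Sum.inl 0) - 1) (Or.inr rfl)
      simp [h0] at this
    · have := hξ (X (Sum.inl (ξ (Sum.inl 0))) * (X (Sum.inl 0) - C (ξ (Sum.inl 0))) - 1)
        (Or.inl ⟨ξ (Sum.inl 0), h0, rfl⟩)
      simp at this
end

section
/- Let Λ = {a ∈ ℂ : a ≠ 0}, and for each a ∈ Λ let h_a = z_a(z_0 − a) − 1 in the polynomial ring ℂ[z_0, (z_a)_{a∈Λ}]. Then every common zero of all h_a satisfies z_0 = 0, yet no power of z_0 lies in the ideal generated by {h_a : a ∈ Λ}. Hence the Nullstellensatz inclusion I(V(A)) ⊆ √⟨A⟩ fails for uncountably many variables. -/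
open MvPolynomial

/-- `h_a = z_a (z_0 - a) - 1` in `ℂ[z_0, (z_a)_{a ≠ 0}]`, variables indexed by
`Option {a : ℂ // a ≠ 0}` with `z_0 = X none`. -/
noncomputable def counterGen (a : {a : ℂ // a ≠ 0}) :
    MvPolynomial (Option {a : ℂ // a ≠ 0}) ℂ :=
  X (some a) * (X none - C a.1) - 1

/-- Every common zero of the `h_a` satisfies `z_0 = 0`, yet no power of `z_0` lies in the
ideal generated by `{h_a}`: the Nullstellensatz inclusion `I(V(A)) ⊆ √⟨A⟩` fails for
uncountably many variables. -/
theorem nullstellensatz_inclusion_fails :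
    (∀ ξ : Option {a : ℂ // a ≠ 0} → ℂ,
      (∀ a, eval ξ (counterGen a) = 0) → ξ none = 0) ∧
    ∀ l : ℕ, (X none : MvPolynomial (Option {a : ℂ // a ≠ 0}) ℂ) ^ l ∉
      Ideal.span (Set.range counterGen) := by
  constructor
  · intro ξ h
    by_contra hne
    have := h ⟨ξ none, hne⟩
    simp [counterGen] at this
  · intro l hmem
    obtain ⟨t, hts, hmem'⟩ := Submodule.mem_span_finite_of_mem_span hmem
    have hex : ∀ g ∈ t, ∃ a : {a : ℂ // a ≠ 0}, counterGen a = g := fun g hg => hts hg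
    choose f hf using hex
    set S : Finset ℂ := t.attach.image (fun g => (f g.1 g.2).1) with hS
    obtain ⟨c, hc⟩ := Infinite.exists_notMem_finset (insert (0 : ℂ) S)
    have hc0 : c ≠ 0 := fun h => hc (by simp [h])
    have hcS : ∀ g (hg : g ∈ t), (f g hg).1 ≠ c := by
      intro g hg heq
      exact hc (Finset.mem_insert_of_mem (by
        rw [hS]; exact Finset.mem_image.mpr ⟨⟨g, hg⟩, Finset.mem_attach _ _, heq⟩))
    set ξ : Option {a : ℂ // a ≠ 0} → ℂ :=
      fun o => match o with
        | none => c
        | some a => (c - a.1)⁻¹ with hξ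
    have h0 : eval ξ ((X (none : Option {a : ℂ // a ≠ 0}) :
        MvPolynomial (Option {a : ℂ // a ≠ 0}) ℂ) ^ l) = 0 := by
      have hle : Ideal.span (↑t : Set (MvPolynomial (Option {a : ℂ // a ≠ 0}) ℂ)) ≤
          RingHom.ker (eval ξ) := by
        rw [Ideal.span_le]
        intro g hg
        rw [SetLike.mem_coe, RingHom.mem_ker, ← hf g hg]
        have hne : c - (f g hg).1 ≠ 0 := sub_ne_zero.mpr (fun h => hcS g hg h.symm)
        simp [counterGen, hξ, inv_mul_cancel₀ hne]
      exact hle hmem'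
    rw [map_pow, eval_X] at h0
    exact pow_ne_zero l hc0 h0
end

section
/- Let R be a commutative Noetherian ring and *R the ultrapower of R with respect to an ultrafilter U. Then *R is a faithfully flat R-algebra. -/
/-!
A relation `∑ i, f i • x i = 0` among germs `x i = [g i]` holds pointwise for `U`-almost every
`t`, i.e. `(g i t)ᵢ` is eventually a syzygy of `f`. Since `R` is Noetherian the syzygies of `f`
are spanned by finitely many fixed vectors `y j`; writing `(g i t)ᵢ = ∑ j, c j t • y j` and
passing to germs shows the relation is trivial, so `*R` is flat by the equational criterion.
Faithfulness: an element of `m • *R` is eventually in `m`, and `1` is not, as `U` is proper.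
-/

open Filter

theorem exists_fin_generating_syzygies {R ι : Type*} [CommRing R] [IsNoetherianRing R]
    [Fintype ι] (f : ι → R) :
    ∃ (k : ℕ) (y : Fin k → ι → R), (∀ j, ∑ i, f i * y j i = 0) ∧
      ∀ z : ι → R, ∑ i, f i * z i = 0 → ∃ c : Fin k → R, ∑ j, c j • y j = z := by
  have mem_ker (z : ι → R) : z ∈ LinearMap.ker (Fintype.linearCombination R f) ↔
      ∑ i, f i * z i = 0 := by
    simp only [LinearMap.mem_ker, Fintype.linearCombination_apply, smul_eq_mul, mul_comm]
  obtain ⟨k, y, hy⟩ := Submodule.fg_iff_exists_fin_generating_family.mp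
    (IsNoetherian.noetherian (LinearMap.ker (Fintype.linearCombination R f)))
  refine ⟨k, y, fun j => (mem_ker _).mp (hy ▸ Submodule.subset_span ⟨j, rfl⟩), fun z hz => ?_⟩
  exact (Submodule.mem_span_range_iff_exists_fun R).mp (hy ▸ (mem_ker z).mpr hz)

namespace Filter.Germ

variable {α R M : Type*} {l : Filter α}

theorem coe_sum_smul [Semiring R] [AddCommMonoid M] [Module R M] {ι : Type*} (s : Finset ι)
    (f : ι → R) (g : ι → α → M) :
    ((∑ i ∈ s, f i • g i : α → M) : Germ l M) = ∑ i ∈ s, f i • (g i : Germ l M) := by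
  simp only [← coe_smul]
  exact map_sum (coeAddHom l) _ s

variable [CommRing R]

theorem flat_of_isNoetherianRing [IsNoetherianRing R] : Module.Flat R (Germ l R) := by
  refine Module.Flat.of_forall_isTrivialRelation fun {n f x} hfx => ?_
  obtain ⟨g, rfl⟩ : ∃ g : Fin n → α → R, (fun i => (g i : Germ l R)) = x :=
    ⟨fun i => (x i).out, funext fun i => Quotient.out_eq _⟩
  obtain ⟨k, y, hy, hgen⟩ := exists_fin_generating_syzygies f
  have h_rel : ∀ᶠ t in l, ∑ i, f i * g i t = 0 := by
    rw [← coe_sum_smul, ← coe_zero, coe_eq] at hfx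
    filter_upwards [hfx] with t ht
    simpa using ht
  choose! c hc using fun t (ht : ∑ i, f i * g i t = 0) => hgen (fun i => g i t) ht
  refine ⟨k, fun i j => y j i, fun j => ((fun t => c t j : α → R) : Germ l R), fun i => ?_, hy⟩
  rw [← coe_sum_smul, coe_eq]
  filter_upwards [h_rel] with t ht
  simpa [mul_comm] using (congrFun (hc t ht) i).symm

theorem ideal_smul_top_ne_top [l.NeBot] {I : Ideal R} (hI : I ≠ ⊤) :
    I • (⊤ : Submodule R (Germ l R)) ≠ ⊤ := by
  have eventually_mem : ∀ x ∈ I • (⊤ : Submodule R (Germ l R)), x.LiftPred (· ∈ I) := by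
    intro x hx
    refine Submodule.smul_induction_on hx (fun r hr x _ => ?_) fun x y hx hy => ?_
    · induction x using Germ.inductionOn with
      | h g => exact liftPred_coe.mpr (.of_forall fun t => I.mul_mem_right (g t) hr)
    · induction x using Germ.inductionOn
      induction y using Germ.inductionOn
      exact liftPred_coe.mpr ((liftPred_coe.mp hx).and (liftPred_coe.mp hy) |>.mono
        fun t ht => I.add_mem ht.1 ht.2)
  intro htop
  have h_one : (1 : Germ l R) ∈ I • (⊤ : Submodule R (Germ l R)) := by
    rw [htop]; exact Submodule.mem_top
  exact hI (I.eq_top_iff_one.mpr (liftPred_const_iff.mp (eventually_mem 1 h_one)))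

end Filter.Germ

/-- Let `R` be a commutative Noetherian ring and `*R` its ultrapower with respect to an
ultrafilter `U` (realized as germs along `U`, an `R`-algebra via the diagonal embedding;
the `R`-module structure below is exactly the diagonal one).  Then `*R` is a faithfully
flat `R`-algebra. -/
theorem ultrapower_faithfullyFlat {ι R : Type*} [CommRing R] [IsNoetherianRing R]
    (U : Ultrafilter ι) :
    Module.FaithfullyFlat R (Filter.Germ (U : Filter ι) R) :=
  { toFlat := Filter.Germ.flat_of_isNoetherianRing,
    submodule_ne_top := fun _ hm => Filter.Germ.ideal_smul_top_ne_top hm.ne_top }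
end

section
/- Let R be a commutative Noetherian ring, U an ultrafilter on I, and *R the ultrapower of R. For every finitely generated R-module M, the natural map M ⊗_R *R → *M, sending m ⊗ r to r·(diagonal image of m), is an isomorphism of *R-modules. -/
/-!
Both sides of the natural map are right exact in `M`: `M ⊗_R *R` because the tensor product is,
and `*M` because a germ whose coordinates lie `U`-almost everywhere in the image of a linear map
lifts coordinatewise. For a finite free module `R^n` both sides are `(*R)^n`, so the five
lemma applied to a finite presentation `R^m → R^n → M → 0`, which exists since `R` is Noetherian,
shows that the natural map is bijective.
-/

open Filter TensorProduct

section

variable {ι : Type*} {R : Type*} [CommRing R] {M : Type*} [AddCommGroup M] [Module R M]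
  {l : Filter ι}

instance germ_smulCommClass : SMulCommClass R (Filter.Germ l R) (Filter.Germ l M) :=
  ⟨fun a s x => by
    induction s using Filter.Germ.inductionOn with
    | h s =>
      induction x using Filter.Germ.inductionOn with
      | h x =>
        simp only [← Germ.coe_smul, ← Germ.coe_smul']
        exact congrArg _ (funext fun i => smul_comm a (s i) (x i))⟩

instance germ_isScalarTower : IsScalarTower R (Filter.Germ l R) (Filter.Germ l M) :=
  ⟨fun a s x => by
    induction s using Filter.Germ.inductionOn with
    | h s =>
      induction x using Filter.Germ.inductionOn with
      | h x =>
        simp only [← Germ.coe_smul, ← Germ.coe_smul']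
        exact congrArg _ (funext fun i => smul_assoc a (s i) (x i))⟩

/-- The natural `R`-linear map `M ⊗_R *R → *M`, sending `m ⊗ r` to `r · *m`, where
`*m = ↑m` is the image of `m` under the diagonal embedding. -/
noncomputable def naturalMap (l : Filter ι) (R : Type*) [CommRing R] (M : Type*)
    [AddCommGroup M] [Module R M] :
    M ⊗[R] Filter.Germ l R →ₗ[R] Filter.Germ l M :=
  TensorProduct.lift <| LinearMap.mk₂ R
    (fun (m : M) (r : Filter.Germ l R) => r • (↑m : Filter.Germ l M))
    (fun m m' r => by
      try dsimp only
      rw [show ((m + m' : M) : Filter.Germ l M) = ↑m + ↑m' from rfl, smul_add])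
    (fun a m r => by
      try dsimp only
      rw [Filter.Germ.const_smul]
      exact (smul_comm a r (↑m : Filter.Germ l M)).symm)
    (fun m r r' => by (try dsimp only); rw [add_smul])
    (fun a m r => by (try dsimp only); rw [smul_assoc])

end

namespace Filter.Germ

variable {ι R M N P : Type*} [Semiring R] [AddCommMonoid M] [Module R M] [AddCommMonoid N]
  [Module R N] [AddCommMonoid P] [Module R P] (l : Filter ι)

def mapLinear (f : M →ₗ[R] N) : Germ l M →ₗ[R] Germ l N where
  toFun := map f
  map_add' x y :=
    inductionOn₂ x y fun x y => congrArg ofFun (funext fun i => map_add f (x i) (y i))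
  map_smul' a x := inductionOn x fun x => congrArg ofFun (funext fun i => map_smul f a (x i))

def evalLinear (κ : Type*) : Germ l (κ → M) →ₗ[R] (κ → Germ l M) :=
  LinearMap.pi fun j => mapLinear l (LinearMap.proj j)

variable {l}

theorem mapLinear_surjective {f : M →ₗ[R] N} (hf : Function.Surjective f) :
    Function.Surjective (mapLinear l f) := by
  intro y
  induction y using inductionOn with
  | h y =>
    exact ⟨↑(fun i => (hf (y i)).choose), congrArg ofFun (funext fun i => (hf (y i)).choose_spec)⟩

theorem exact_mapLinear {f : M →ₗ[R] N} {g : N →ₗ[R] P} (hfg : Function.Exact f g) :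
    Function.Exact (mapLinear l f) (mapLinear l g) := by
  intro y
  constructor
  · induction y using inductionOn with
    | h y =>
      intro hy
      have hev : ∀ᶠ i in l, ∃ x, f x = y i := by
        filter_upwards [coe_eq.mp hy] with i hi using (hfg (y i)).mp hi
      classical
      refine ⟨↑(fun i => if h : ∃ x, f x = y i then h.choose else 0), coe_eq.mpr ?_⟩
      filter_upwards [hev] with i hi
      simp only [Function.comp_apply, dif_pos hi, hi.choose_spec]
  · rintro ⟨x, rfl⟩
    induction x using inductionOn with
    | h x => exact congrArg ofFun (funext fun i => hfg.apply_apply_eq_zero (x i))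

theorem evalLinear_bijective (κ : Type*) [Finite κ] :
    Function.Bijective (evalLinear (R := R) (M := M) l κ) := by
  constructor
  · intro x y hxy
    induction x, y using inductionOn₂ with
    | h x y =>
      exact coe_eq.mpr ((eventually_all.mpr fun j => coe_eq.mp (congrFun hxy j)).mono
        fun i hi => funext hi)
  · intro y
    choose y' hy' using fun j => Quot.exists_rep (y j)
    exact ⟨↑(fun i j => y' j i), funext fun j => hy' j⟩

end Filter.Germ

section

variable {ι R M N : Type*} [CommRing R] [AddCommGroup M] [Module R M] [AddCommGroup N]
  [Module R N] {l : Filter ι}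

@[simp]
theorem naturalMap_tmul (m : M) (r : Germ l R) :
    naturalMap l R M (m ⊗ₜ r) = r • (m : Germ l M) := rfl

theorem naturalMap_tmul_mul (s r : Germ l R) (m : M) :
    naturalMap l R M (m ⊗ₜ (s * r)) = s • naturalMap l R M (m ⊗ₜ r) := by
  simp only [naturalMap_tmul, mul_smul]

theorem mapLinear_comp_naturalMap (f : M →ₗ[R] N) :
    Germ.mapLinear l f ∘ₗ naturalMap l R M = naturalMap l R N ∘ₗ f.rTensor (Germ l R) := by
  refine TensorProduct.ext' fun m r => ?_
  induction r using Germ.inductionOn with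
  | h r => exact congrArg Germ.ofFun (funext fun i => map_smul f (r i) m)

theorem naturalMap_pi_bijective (κ : Type*) [Fintype κ] [DecidableEq κ] :
    Function.Bijective (naturalMap l R (κ → R)) := by
  have h : Germ.evalLinear l κ ∘ₗ naturalMap l R (κ → R) =
      (TensorProduct.piScalarRight R R (Germ l R) κ).toLinearMap ∘ₗ
        (TensorProduct.comm R (κ → R) (Germ l R)).toLinearMap := by
    refine TensorProduct.ext' fun v r => funext fun j => ?_
    induction r using Germ.inductionOn with
    | h r => exact congrArg Germ.ofFun (funext fun i => mul_comm (r i) (v j))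
  rw [← (Germ.evalLinear_bijective (R := R) (M := R) κ).of_comp_iff', ← LinearMap.coe_comp, h]
  exact ((TensorProduct.comm R (κ → R) (Germ l R)).trans
    (TensorProduct.piScalarRight R R (Germ l R) κ)).bijective

theorem naturalMap_bijective_of_finitePresentation [Module.FinitePresentation R M] :
    Function.Bijective (naturalMap l R M) := by
  obtain ⟨n, m, f, g, hf, hgf⟩ := Module.FinitePresentation.exists_fin' R M
  exact LinearMap.bijective_of_surjective_of_bijective_of_right_exact
    (g.rTensor (Germ l R)) (f.rTensor (Germ l R)) (Germ.mapLinear l g) (Germ.mapLinear l f)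
    (naturalMap l R (Fin m → R)) (naturalMap l R (Fin n → R)) (naturalMap l R M)
    (mapLinear_comp_naturalMap g) (mapLinear_comp_naturalMap f)
    (rTensor_exact (Germ l R) hgf hf) (Germ.exact_mapLinear hgf)
    (naturalMap_pi_bijective (Fin m)).surjective (naturalMap_pi_bijective (Fin n))
    (LinearMap.rTensor_surjective (Germ l R) hf) (Germ.mapLinear_surjective hf)

end

/-- For a commutative Noetherian ring `R`, an ultrafilter `U` on `ι`, and a finitely
generated `R`-module `M`, the natural map `M ⊗_R *R → *M`, `m ⊗ r ↦ r·(*m)`, is an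
isomorphism of `*R`-modules: it is bijective, and it is `*R`-linear with respect to the
`*R`-action on the right tensor factor. -/
theorem naturalMap_bijective {ι R M : Type*} [CommRing R] [IsNoetherianRing R]
    [AddCommGroup M] [Module R M] [Module.Finite R M] (U : Ultrafilter ι) :
    Function.Bijective (naturalMap (U : Filter ι) R M) ∧
    ∀ (s r : Filter.Germ (U : Filter ι) R) (m : M),
      naturalMap (U : Filter ι) R M (m ⊗ₜ[R] (s * r)) =
        s • naturalMap (U : Filter ι) R M (m ⊗ₜ[R] r) :=
  have := Module.finitePresentation_of_finite R M
  ⟨naturalMap_bijective_of_finitePresentation, naturalMap_tmul_mul⟩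
end

section
/- Let R be a commutative Noetherian ring and *R its ultrapower over an ultrafilter. For any ideal I of R, the set of minimal primes of *R over the extension I·*R is exactly {p·*R : p a minimal prime of R over I}; in particular every prime of *R containing I·*R contains p·*R for some minimal prime p over I. -/
/-!
For a finitely generated ideal `a = (a₁, …, aₙ)` of `R`, the extension `a·*R` consists exactly
of the germs lying in `a` for `U`-almost every index: a function that is almost everywhere in
`a` can be written pointwise as `∑ cⱼ(i) aⱼ`, and the germs of the coefficient functions `cⱼ`
exhibit it as an element of `a·*R`. Hence for a prime `p` of a Noetherian ring, `p·*R` is prime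
(the ultrafilter decides which factor of a product lies in `p`) and contracts back to `p`.
Extension along any ring map with these two properties carries the minimal primes over `I`
onto those over `I·*R`.
-/

open Filter

/-- The diagonal embedding of `R` into its ultrapower `*R = (ι → R)/U`. -/
noncomputable def diag {ι : Type*} (U : Ultrafilter ι) (R : Type*) [CommRing R] :
    R →+* Filter.Germ (U : Filter ι) R :=
  (Filter.Germ.coeRingHom (U : Filter ι)).comp (Pi.constRingHom ι R)

namespace Ideal

variable {R S : Type*} [CommRing R] [CommRing S] {f : R →+* S} {I : Ideal R}

theorem exists_minimalPrimes_map_le {q : Ideal S} [q.IsPrime] (h : I.map f ≤ q) :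
    ∃ p ∈ I.minimalPrimes, p.map f ≤ q := by
  obtain ⟨p, hp, hpq⟩ := exists_minimalPrimes_le (map_le_iff_le_comap.mp h)
  exact ⟨p, hp, map_le_iff_le_comap.mpr hpq⟩

theorem minimalPrimes_map_of_isPrime_map
    (hprime : ∀ p ∈ I.minimalPrimes, (p.map f).IsPrime)
    (hcomap : ∀ p ∈ I.minimalPrimes, (p.map f).comap f ≤ p) :
    (I.map f).minimalPrimes = map f '' I.minimalPrimes := by
  apply Set.Subset.antisymm
  · rintro Q ⟨⟨hQ, hIQ⟩, hQmin⟩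
    obtain ⟨p, hp, hpQ⟩ := exists_minimalPrimes_map_le hIQ
    exact ⟨p, hp, le_antisymm hpQ (hQmin ⟨hprime p hp, map_mono hp.1.2⟩ hpQ)⟩
  · rintro _ ⟨p, hp, rfl⟩
    refine ⟨⟨hprime p hp, map_mono hp.1.2⟩, fun q ⟨hq, hIq⟩ hqp => ?_⟩
    obtain ⟨p', hp', hp'q⟩ := exists_minimalPrimes_map_le hIq
    have hp'p : p' ≤ p := calc
      p' ≤ q.comap f := map_le_iff_le_comap.mp hp'q
      _ ≤ (p.map f).comap f := comap_mono hqp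
      _ ≤ p := hcomap p hp
    exact (map_mono (hp.2 hp'.1 hp'p)).trans hp'q

end Ideal

namespace Filter.Germ

variable {ι R : Type*} [CommRing R]

def ideal (l : Filter ι) (a : Ideal R) : Ideal (Germ l R) where
  carrier := {x | x.LiftPred (· ∈ a)}
  zero_mem' := liftPred_const a.zero_mem
  add_mem' := by
    rintro ⟨f⟩ ⟨g⟩ hf hg
    exact (hf.and hg).mono fun i h => a.add_mem h.1 h.2
  smul_mem' := by
    rintro ⟨c⟩ ⟨f⟩ hf
    exact hf.mono fun i h => a.mul_mem_left (c i) h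

variable {l : Filter ι} {a : Ideal R}

theorem coe_mem_ideal {f : ι → R} : (f : Germ l R) ∈ ideal l a ↔ ∀ᶠ i in l, f i ∈ a :=
  liftPred_coe

theorem const_mem_ideal [l.NeBot] {x : R} : (x : Germ l R) ∈ ideal l a ↔ x ∈ a :=
  liftPred_const_iff

theorem isPrime_ideal (U : Ultrafilter ι) (p : Ideal R) [hp : p.IsPrime] :
    (ideal (U : Filter ι) p).IsPrime where
  ne_top' h :=
    hp.ne_top <| (Ideal.eq_top_iff_one p).mpr <| const_mem_ideal.mp (h ▸ Submodule.mem_top)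
  mem_or_mem' := by
    rintro ⟨f⟩ ⟨g⟩ hfg
    exact Ultrafilter.eventually_or.mp (hfg.mono fun i => hp.mem_or_mem)

end Filter.Germ

section Ultrapower

variable {ι R : Type*} [CommRing R] (U : Ultrafilter ι)

open Filter.Germ

theorem comap_diag_germ_ideal (a : Ideal R) : (ideal (U : Filter ι) a).comap (diag U R) = a :=
  Ideal.ext fun _ => const_mem_ideal

theorem map_diag_eq_germ_ideal_of_fg {a : Ideal R} (ha : a.FG) :
    a.map (diag U R) = ideal (U : Filter ι) a := by
  refine le_antisymm (Ideal.map_le_iff_le_comap.mpr fun x hx => ?_) ?_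
  · exact (comap_diag_germ_ideal U a).ge hx
  intro x hx
  induction x using Filter.Germ.inductionOn with | h f =>
  obtain ⟨s, rfl⟩ := ha
  have hspan : Ideal.span (s : Set R) = Ideal.span (Set.range ((↑) : s → R)) := by simp
  rw [hspan] at hx ⊢
  choose! c hc using fun i (hi : f i ∈ Ideal.span (Set.range ((↑) : s → R))) =>
    Ideal.mem_span_range_iff_exists_fun.mp hi
  rw [Ideal.map_span, ← Set.range_comp, Ideal.mem_span_range_iff_exists_fun]
  refine ⟨fun j => ((fun i => c i j : ι → R) : Germ (U : Filter ι) R), ?_⟩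
  rw [coe_mem_ideal] at hx
  calc ∑ j, ((fun i => c i j : ι → R) : Germ (U : Filter ι) R) * diag U R j
      = coeRingHom (U : Filter ι) (∑ j, (fun i => c i j) * fun _ => (j : R)) := by
        simp only [map_sum, map_mul]; rfl
    _ = f := coe_eq.mpr <| hx.mono fun i hi => by simpa [Finset.sum_apply] using hc i hi

theorem isPrime_map_diag_of_fg {p : Ideal R} [p.IsPrime] (hp : p.FG) :
    (p.map (diag U R)).IsPrime := by
  rw [map_diag_eq_germ_ideal_of_fg U hp]
  exact isPrime_ideal U p

theorem comap_map_diag_of_fg {a : Ideal R} (ha : a.FG) :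
    (a.map (diag U R)).comap (diag U R) = a := by
  rw [map_diag_eq_germ_ideal_of_fg U ha, comap_diag_germ_ideal]

end Ultrapower

/-- For a commutative Noetherian ring `R` with ultrapower `*R` and an ideal `I ⊆ R`, the
minimal primes of `*R` over the extension `I·*R` are exactly the extensions `p·*R` of the
minimal primes `p` of `R` over `I`; in particular every prime of `*R` containing `I·*R`
contains some such `p·*R`. -/
theorem ultrapower_minimalPrimes {ι R : Type*} [CommRing R] [IsNoetherianRing R]
    (U : Ultrafilter ι) (I : Ideal R) :
    (I.map (diag U R)).minimalPrimes = (Ideal.map (diag U R)) '' I.minimalPrimes ∧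
    ∀ q : Ideal (Filter.Germ (U : Filter ι) R), q.IsPrime → I.map (diag U R) ≤ q →
      ∃ p ∈ I.minimalPrimes, p.map (diag U R) ≤ q := by
  refine ⟨Ideal.minimalPrimes_map_of_isPrime_map (fun p hp => ?_) (fun p _ => ?_),
    fun q _ => Ideal.exists_minimalPrimes_map_le⟩
  · have : p.IsPrime := hp.1.1
    exact isPrime_map_diag_of_fg U (IsNoetherian.noetherian p)
  · exact (comap_map_diag_of_fg U (IsNoetherian.noetherian p)).le
end

section
/- Let R be a commutative Noetherian ring and *R its ultrapower over an ultrafilter. Then the nilradical of *R equals the extension of the nilradical of R, i.e. nil(*R) = nil(R)·*R; equivalently, for any ideal I of R, √(I·*R) = (√I)·*R. -/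
/-!
A germ lies in `J·*R` exactly when it lies in `J` for `U`-almost every index: writing
`J = (v₁, …, vₙ)`, coefficients in `*R` are germs of pointwise coefficients and conversely.
For `√I` the Noetherian hypothesis gives one exponent `N` with `(√I)^N ⊆ I`, so a germ
that is almost everywhere in `√I` has its `N`-th power almost everywhere in `I`.
-/

open Filter

namespace Filter.Germ

def constRingHom {ι : Type*} (l : Filter ι) (R : Type*) [CommSemiring R] : R →+* Germ l R :=
  (coeRingHom l).comp (Pi.constRingHom ι R)

variable {ι R : Type*} [CommSemiring R] {l : Filter ι}

theorem coe_sum_mul_const {n : ℕ} (f : Fin n → ι → R) (v : Fin n → R) :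
    ((fun i => ∑ j, f j i * v j : ι → R) : Germ l R) = ∑ j, ↑(f j) * constRingHom l R (v j) := by
  change coeRingHom l _ = _
  rw [← Finset.sum_fn]
  simp only [map_sum]
  rfl

theorem coe_mem_map_constRingHom_iff {J : Ideal R} (hJ : J.FG) (g : ι → R) :
    (g : Germ l R) ∈ J.map (constRingHom l R) ↔ ∀ᶠ i in l, g i ∈ J := by
  obtain ⟨n, v, rfl⟩ := Submodule.fg_iff_exists_fin_generating_family.mp hJ
  rw [Ideal.map_span, ← Set.range_comp, Ideal.mem_span_range_iff_exists_fun]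
  simp only [Ideal.mem_span_range_iff_exists_fun, skolem, Function.comp_apply]
  constructor
  · rintro ⟨a, ha⟩
    choose f hf using fun j => Quot.exists_rep (a j)
    refine ⟨fun i j => f j i, coe_eq.mp ?_⟩
    rw [coe_sum_mul_const, ← ha]
    congr! 2
    exact hf _
  · rintro ⟨c, hc⟩
    refine ⟨fun j => ↑(fun i => c i j), ?_⟩
    rw [← coe_sum_mul_const]
    exact coe_eq.mpr hc

theorem radical_map_constRingHom {J : Ideal R} (hJ : J.FG) (hrad : J.radical.FG) :
    (J.map (constRingHom l R)).radical = J.radical.map (constRingHom l R) := by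
  obtain ⟨N, hN⟩ := J.exists_radical_pow_le_of_fg hrad
  ext x
  induction x using inductionOn with | h g =>
  simp only [Ideal.mem_radical_iff, ← coe_pow, coe_mem_map_constRingHom_iff hJ,
    coe_mem_map_constRingHom_iff hrad]
  constructor
  · rintro ⟨n, hn⟩
    filter_upwards [hn] with i hi using ⟨n, hi⟩
  · intro hg
    refine ⟨N, ?_⟩
    filter_upwards [hg] with i hi using hN (Ideal.pow_mem_pow hi N)

end Filter.Germ

/-- For a commutative Noetherian ring `R` with ultrapower `*R`: the nilradical of `*R` is
the extension of the nilradical of `R`, and for any ideal `I ⊆ R` the radical of the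
extension `I·*R` is the extension of the radical `√I`. -/
theorem ultrapower_nilradical_and_radical {ι R : Type*} [CommRing R] [IsNoetherianRing R]
    (U : Ultrafilter ι) :
    nilradical (Filter.Germ (U : Filter ι) R) = (nilradical R).map (diag U R) ∧
    ∀ I : Ideal R, (I.map (diag U R)).radical = I.radical.map (diag U R) := by
  have radical_map : ∀ I : Ideal R, (I.map (diag U R)).radical = I.radical.map (diag U R) :=
    fun I => Germ.radical_map_constRingHom (IsNoetherian.noetherian I)
      (IsNoetherian.noetherian I.radical)
  refine ⟨?_, radical_map⟩
  simpa only [nilradical, Ideal.zero_eq_bot, Ideal.map_bot] using radical_map ⊥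
end

section
/- Let X be an irreducible affine variety over an algebraically closed field k and x ∈ X. Every prime ideal p of the local ring O_{X,x} admits a 'generic point' in the following sense of finite intersection property: for any finitely many f_1,...,f_r ∈ p, g_1,...,g_s ∉ p, and open U ∋ x, there exists y ∈ U with f_i(y) = 0 for all i and g_j(y) ≠ 0 for all j. -/
open MvPolynomial

/-! By the Nullstellensatz, the polynomials vanishing on `V(q)` form `√q = q`. Hence the product
of the `g ∈ G`, which lies outside the prime `q`, is nonzero at some point `y` of `V(q)`; and
`V(q) ⊆ V(J)` while every `f ∈ F ⊆ q` vanishes on `V(q)`. -/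

theorem MvPolynomial.exists_mem_zeroLocus_eval_ne_zero {k σ : Type*} [Field k] [IsAlgClosed k]
    [Finite σ] {q : Ideal (MvPolynomial σ k)} (hq : q.IsPrime) {g : MvPolynomial σ k}
    (hg : g ∉ q) : ∃ y ∈ zeroLocus k q, eval y g ≠ 0 := by
  by_contra! h
  apply hg
  rw [← hq.radical, ← vanishingIdeal_zeroLocus_eq_radical (K := k)]
  exact mem_vanishingIdeal_iff.mpr h

/-- The prime `p ⊆ O_{X,x}` is encoded by its contraction `q` to `k[x₁, …, xₙ]`, and `G` encodes
both the `g_j ∉ p` and the equations of a basic open `U ∋ x`. -/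
theorem generic_point_fip_general {k : Type*} [Field k] [IsAlgClosed k] {n : ℕ}
    (J : Ideal (MvPolynomial (Fin n) k))
    (q : Ideal (MvPolynomial (Fin n) k)) (hq : q.IsPrime)
    (hJq : J ≤ q)
    (F G : Finset (MvPolynomial (Fin n) k))
    (hF : ∀ f ∈ F, f ∈ q) (hG : ∀ g ∈ G, g ∉ q) :
    ∃ y : Fin n → k, (∀ f ∈ J, eval y f = 0) ∧
      (∀ f ∈ F, eval y f = 0) ∧ ∀ g ∈ G, eval y g ≠ 0 := by
  have hGq : ∏ g ∈ G, g ∉ q := fun h ↦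
    let ⟨g, hgG, hgq⟩ := (hq.prod_mem_iff_exists_mem G).mp h
    hG g hgG hgq
  obtain ⟨y, hyq, hyG⟩ := exists_mem_zeroLocus_eval_ne_zero hq hGq
  rw [map_prod, Finset.prod_ne_zero_iff] at hyG
  exact ⟨y, fun f hf ↦ hyq f (hJq hf), fun f hf ↦ hyq f (hF f hf), hyG⟩

/-- Generic points for prime ideals of the local ring of an irreducible affine variety, in
finite-intersection-property form.  Here `X = V(J) ⊆ k^n` is an irreducible affine variety
(`J` prime), `x ∈ X`, and a prime ideal of `O_{X,x}` is encoded by a prime ideal `q` with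
`J ≤ q` contained in the maximal ideal `m_x` of `x` (i.e. all elements of `q` vanish at
`x`).  For any finitely many `f ∈ F ⊆ q` and `g ∈ G` with `g ∉ q` (the latter encode both
the functions `g_j ∉ p` and a basic open neighbourhood `U ∋ x`), there is a point `y ∈ X`
with `f(y) = 0` for all `f ∈ F` and `g(y) ≠ 0` for all `g ∈ G`. -/
theorem generic_point_fip {k : Type*} [Field k] [IsAlgClosed k] {n : ℕ}
    (J : Ideal (MvPolynomial (Fin n) k)) (hJ : J.IsPrime)
    (x : Fin n → k) (hxJ : ∀ f ∈ J, eval x f = 0)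
    (q : Ideal (MvPolynomial (Fin n) k)) (hq : q.IsPrime)
    (hJq : J ≤ q) (hqx : ∀ f ∈ q, eval x f = 0)
    (F G : Finset (MvPolynomial (Fin n) k))
    (hF : ∀ f ∈ F, f ∈ q) (hG : ∀ g ∈ G, g ∉ q) :
    ∃ y : Fin n → k, (∀ f ∈ J, eval y f = 0) ∧
      (∀ f ∈ F, eval y f = 0) ∧ ∀ g ∈ G, eval y g ≠ 0 :=
  generic_point_fip_general J q hq hJq F G hF hG
end

section
/- Let f ∈ ℂ[z] be a polynomial in one variable whose coefficients lie in a bounded set and whose leading behavior is controlled as follows: f = g + h where all coefficients of h have absolute value < ε and g has some coefficient of absolute value ≥ δ in positive degree. If a ∈ ℂ satisfies g(a)/δ arbitrarily small, then f has a root within distance o(1) of a as ε → 0. Formally (standard form of the Robinson–Callot argument): for every δ > 0, M > 0 and η > 0 there exists ε > 0 such that for every polynomial f of degree ≤ n with all coefficients of absolute value ≤ M, and every a with |a| ≤ M and |f(a)| ≤ ε, if some coefficient of f in positive degree has absolute value ≥ δ, then f has a root b with |b − a| ≤ η. -/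
/-!
Shift to `g = taylor a f`, i.e. `g z = f (z + a)`. The positive-degree coefficients of `f` are
controlled by those of `g` with constants depending only on `n` and `‖a‖`, so some `g_j` with
`j > 0` is bounded below. If all roots of `g` had norm `≥ ρ`, then after rescaling `z ↦ ρ z` all
roots lie outside the unit disc, where the Mahler measure of `g` is `‖g 0‖ = ‖f a‖`; the bound
`‖coeff‖ ≤ choose * mahlerMeasure` then gives `‖g_j‖ ρ ^ j ≤ 2 ^ n ‖f a‖`, which fails once
`‖f a‖` is small enough.
-/

open Polynomial

namespace Polynomial

section

variable {R : Type*} [NormedCommRing R] [NormOneClass R]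

theorem norm_coeff_taylor_le {p : R[X]} {n : ℕ} (hp : p.natDegree ≤ n) {B : ℝ}
    (hB : ∀ k, ‖p.coeff k‖ ≤ B) (a : R) (i : ℕ) :
    ‖(taylor a p).coeff i‖ ≤ (n + 1) * 2 ^ n * max 1 ‖a‖ ^ n * B := by
  have hB0 : 0 ≤ B := (norm_nonneg _).trans (hB 0)
  have hdeg : (hasseDeriv i p).natDegree < n + 1 :=
    Nat.lt_succ_of_le ((natDegree_hasseDeriv_le p i).trans (Nat.sub_le_of_le_add (by omega)))
  have hterm : ∀ k < n + 1,
      ‖(hasseDeriv i p).coeff k * a ^ k‖ ≤ 2 ^ n * max 1 ‖a‖ ^ n * B := by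
    intro k hk
    rw [hasseDeriv_coeff]
    rcases le_or_gt (k + i) n with hki | hki
    · have hchoose : ‖(((k + i).choose i : ℕ) : R)‖ ≤ 2 ^ n := by
        refine (Nat.norm_cast_le _).trans ?_
        rw [norm_one, mul_one]
        exact_mod_cast (Nat.choose_le_two_pow _ _).trans (Nat.pow_le_pow_right two_pos hki)
      have hpow : ‖a ^ k‖ ≤ max 1 ‖a‖ ^ n :=
        (norm_pow_le a k).trans <| (pow_le_pow_left₀ (norm_nonneg a) (le_max_right _ _) k).trans
          (pow_le_pow_right₀ (le_max_left _ _) (by omega))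
      calc ‖(((k + i).choose i : ℕ) : R) * p.coeff (k + i) * a ^ k‖
          ≤ ‖(((k + i).choose i : ℕ) : R)‖ * ‖p.coeff (k + i)‖ * ‖a ^ k‖ :=
            (norm_mul_le _ _).trans (by gcongr; exact norm_mul_le _ _)
        _ ≤ 2 ^ n * B * max 1 ‖a‖ ^ n := by gcongr; exact hB _
        _ = 2 ^ n * max 1 ‖a‖ ^ n * B := by ring
    · rw [coeff_eq_zero_of_natDegree_lt (hp.trans_lt hki), mul_zero, zero_mul, norm_zero]
      positivity
  calc ‖(taylor a p).coeff i‖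
      = ‖∑ k ∈ Finset.range (n + 1), (hasseDeriv i p).coeff k * a ^ k‖ := by
        rw [taylor_coeff, eval_eq_sum_range' hdeg]
    _ ≤ ∑ k ∈ Finset.range (n + 1), ‖(hasseDeriv i p).coeff k * a ^ k‖ := norm_sum_le _ _
    _ ≤ ∑ _k ∈ Finset.range (n + 1), 2 ^ n * max 1 ‖a‖ ^ n * B :=
        Finset.sum_le_sum fun k hk => hterm k (Finset.mem_range.1 hk)
    _ = (n + 1) * 2 ^ n * max 1 ‖a‖ ^ n * B := by
        rw [Finset.sum_const, Finset.card_range, nsmul_eq_mul]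
        push_cast
        ring

theorem norm_coeff_le_of_norm_coeff_taylor_le {f : R[X]} {n : ℕ} (hf : f.natDegree ≤ n) {a : R}
    {B : ℝ} (hB : ∀ j, 0 < j → ‖(taylor a f).coeff j‖ ≤ B) {i : ℕ} (hi : 0 < i) :
    ‖f.coeff i‖ ≤ (n + 1) * 2 ^ n * max 1 ‖a‖ ^ n * B := by
  set p := taylor a f - C (f.eval a)
  have hp : p.natDegree ≤ n :=
    (natDegree_sub_le _ _).trans (max_le ((natDegree_taylor f a).trans_le hf) (by simp))
  have hpB : ∀ k, ‖p.coeff k‖ ≤ B := by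
    intro k
    rcases k.eq_zero_or_pos with rfl | hk
    · simpa [p, taylor_coeff_zero] using (norm_nonneg _).trans (hB 1 one_pos)
    · simpa [p, coeff_C, hk.ne'] using hB k hk
  have hfp : taylor (-a) p = f - C (f.eval a) := by
    simp [p, taylor_taylor, taylor_C]
  simpa [hfp, coeff_C, hi.ne'] using norm_coeff_taylor_le hp hpB (-a) i

end

theorem norm_eval_zero_eq_leadingCoeff_mul_prod_roots (p : ℂ[X]) :
    ‖p.eval 0‖ = ‖p.leadingCoeff‖ * (p.roots.map (‖·‖)).prod := by
  conv_lhs => rw [(IsAlgClosed.splits p).eq_prod_roots]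
  simp only [eval_mul, eval_C, eval_multiset_prod, Multiset.map_map, Function.comp_def, eval_sub,
    eval_X, zero_sub, norm_mul, Multiset.prod_map_neg, norm_pow, norm_neg, norm_one, one_pow,
    one_mul]
  exact congrArg _ (map_multiset_prod (normHom (α := ℂ)) _)

theorem mahlerMeasure_eq_norm_eval_zero {p : ℂ[X]} (h : ∀ r ∈ p.roots, 1 ≤ ‖r‖) :
    p.mahlerMeasure = ‖p.eval 0‖ := by
  rw [mahlerMeasure_eq_leadingCoeff_mul_prod_roots, norm_eval_zero_eq_leadingCoeff_mul_prod_roots,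
    Multiset.map_congr rfl fun r hr => max_eq_right (h r hr)]

theorem norm_coeff_mul_pow_le_of_le_norm_roots (p : ℂ[X]) {η : ℝ} (hη : 0 < η)
    (h : ∀ r ∈ p.roots, η ≤ ‖r‖) (j : ℕ) :
    ‖p.coeff j‖ * η ^ j ≤ p.natDegree.choose j * ‖p.eval 0‖ := by
  have hη' : (η : ℂ) ≠ 0 := by exact_mod_cast hη.ne'
  set q := p.comp (C (η : ℂ) * X)
  have hroots : ∀ r ∈ q.roots, 1 ≤ ‖r‖ := by
    have := roots_comp_C_mul_X_add_C p (η : ℂ) 0 (isUnit_iff_ne_zero.2 hη')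
    simp only [map_zero, add_zero, sub_zero] at this
    simp only [q, this, Multiset.mem_map, forall_exists_index, and_imp, forall_apply_eq_imp_iff₂]
    intro r hr
    rw [Ring.inverse_eq_inv', norm_mul, norm_inv, Complex.norm_real, Real.norm_of_nonneg hη.le,
      inv_mul_eq_div, one_le_div hη]
    exact h r hr
  have hdeg : q.natDegree = p.natDegree := by
    simp [q, natDegree_comp, natDegree_C_mul_X _ hη']
  have := norm_coeff_le_choose_mul_mahlerMeasure j q
  rw [mahlerMeasure_eq_norm_eval_zero hroots, hdeg, comp_C_mul_X_coeff] at this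
  simpa [q, eval_comp, norm_mul, Complex.norm_real, abs_of_pos hη] using this

theorem exists_root_norm_sub_lt {f : ℂ[X]} {a : ℂ} {η : ℝ} (hη : 0 < η) {j : ℕ}
    (h : f.natDegree.choose j * ‖f.eval a‖ < ‖(taylor a f).coeff j‖ * η ^ j) :
    ∃ b, f.eval b = 0 ∧ ‖b - a‖ < η := by
  by_contra! hfar
  have hroots : ∀ r ∈ (taylor a f).roots, η ≤ ‖r‖ := fun r hr => by
    simpa using hfar (r + a) (by simpa [taylor_eval] using (isRoot_of_mem_roots hr).eq_zero)
  have := norm_coeff_mul_pow_le_of_le_norm_roots (taylor a f) hη hroots j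
  rw [natDegree_taylor, taylor_eval, zero_add] at this
  exact this.not_gt h

end Polynomial

/-- Standard (ε–δ) form of the Robinson–Callot argument in one variable: for every
`δ, M, η > 0` there is `ε > 0` such that every polynomial `f ∈ ℂ[z]` of degree at most
`n`, with all coefficients of absolute value at most `M` and some coefficient in positive
degree of absolute value at least `δ`, which is `ε`-small at a point `a` with `|a| ≤ M`,
has a root `b` with `|b - a| ≤ η`. -/
theorem root_near_almost_zero (n : ℕ) :
    ∀ δ M η : ℝ, 0 < δ → 0 < M → 0 < η →
      ∃ ε : ℝ, 0 < ε ∧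
        ∀ f : Polynomial ℂ, f.natDegree ≤ n →
          (∀ i : ℕ, ‖f.coeff i‖ ≤ M) →
          (∃ i : ℕ, 0 < i ∧ δ ≤ ‖f.coeff i‖) →
          ∀ a : ℂ, ‖a‖ ≤ M → ‖f.eval a‖ ≤ ε →
            ∃ b : ℂ, f.eval b = 0 ∧ ‖b - a‖ ≤ η := by
  intro δ M η hδ _ hη
  set K : ℝ := (n + 1) * 2 ^ n * max 1 M ^ n
  set ρ : ℝ := min η 1
  have hK : 0 < K := by positivity
  have hρ : 0 < ρ := lt_min hη one_pos
  refine ⟨δ * ρ ^ n / (2 * K * 2 ^ n), by positivity, ?_⟩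
  rintro f hf - ⟨i, hi, hδi⟩ a ha hfa
  obtain ⟨j, -, hgj⟩ : ∃ j, 0 < j ∧ δ / (2 * K) < ‖(taylor a f).coeff j‖ := by
    by_contra! hsmall
    have hfi : ‖f.coeff i‖ ≤ K * (δ / (2 * K)) :=
      (norm_coeff_le_of_norm_coeff_taylor_le hf hsmall hi).trans (by simp only [K]; gcongr)
    have : K * (δ / (2 * K)) = δ / 2 := by field_simp
    linarith
  have hjn : j ≤ n := by
    refine (le_natDegree_of_ne_zero fun h => ?_).trans ((natDegree_taylor f a).trans_le hf)
    rw [h, norm_zero] at hgj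
    exact hgj.not_ge (by positivity)
  obtain ⟨b, hb, hba⟩ := exists_root_norm_sub_lt hρ (j := j) <| calc
    (f.natDegree.choose j : ℝ) * ‖f.eval a‖ ≤ 2 ^ n * (δ * ρ ^ n / (2 * K * 2 ^ n)) := by
      gcongr
      exact_mod_cast (Nat.choose_le_two_pow _ _).trans (Nat.pow_le_pow_right two_pos hf)
    _ = δ / (2 * K) * ρ ^ n := by field_simp
    _ < ‖(taylor a f).coeff j‖ * ρ ^ n := by gcongr
    _ ≤ ‖(taylor a f).coeff j‖ * ρ ^ j :=
      mul_le_mul_of_nonneg_left (pow_le_pow_of_le_one hρ.le (min_le_right _ _) hjn) (norm_nonneg _)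
  exact ⟨b, hb, hba.le.trans (min_le_left _ _)⟩
end

section
/- Every rational map φ : X → Y between affine varieties in ℂ^ℕ has nonempty domain. Equivalently: if X ⊆ ℂ^ℕ is an affine variety (zero set of an ideal of ℂ[z_1,z_2,...]) with I(X) prime, and (f_i)_{i∈ℕ} is a sequence of regular functions on X none of which is identically zero on X, then there is a point of X at which no f_i vanishes. -/
/-!
Localize the domain `ℂ[z_i]/J` at the multiplicative set generated by the `f_i` and take a
residue field `K` of the (nonzero) localization. It is generated over `ℂ` by countably many
elements, so has countable `ℂ`-dimension; a transcendental `x` would give the uncountable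
independent family `(x - c)⁻¹`, so `K` is algebraic over `ℂ`, hence equal to `ℂ`. The images of
the `z_i` in `K = ℂ` are a point of `V(J)` at which every `f_i` is a unit.
-/

open Cardinal MvPolynomial

universe u v

theorem Set.Countable.submonoidClosure {M : Type*} [Monoid M] {s : Set M} (hs : s.Countable) :
    (Submonoid.closure s : Set M).Countable := by
  have : Countable s := hs.to_subtype
  rw [Submonoid.closure_eq_mrange, MonoidHom.coe_mrange]
  exact Set.countable_range _

theorem Algebra.IsAlgebraic.of_lift_rank_lt {K : Type u} {L : Type v} [Field K] [Field L]
    [Algebra K L] (h : lift.{u} (Module.rank K L) < lift.{v} #K) : Algebra.IsAlgebraic K L := by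
  refine ⟨fun x => ?_⟩
  by_contra hx
  exact h.not_ge (Transcendental.linearIndependent_sub_inv hx).cardinal_lift_le_rank

def Algebra.CountablyGenerated (R A : Type*) [CommSemiring R] [Semiring A] [Algebra R A] :
    Prop :=
  ∃ s : Set A, s.Countable ∧ Algebra.adjoin R s = ⊤

namespace Algebra.CountablyGenerated

theorem mvPolynomial (R σ : Type*) [CommSemiring R] [Countable σ] :
    CountablyGenerated R (MvPolynomial σ R) :=
  ⟨_, Set.countable_range X, adjoin_range_X⟩

theorem of_surjective {R A B : Type*} [CommSemiring R] [Semiring A] [Algebra R A] [Semiring B]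
    [Algebra R B] (h : CountablyGenerated R A) (f : A →ₐ[R] B) (hf : Function.Surjective f) :
    CountablyGenerated R B := by
  obtain ⟨s, hs, hadj⟩ := h
  refine ⟨f '' s, hs.image f, ?_⟩
  rw [Algebra.adjoin_image, hadj, Algebra.map_top, (AlgHom.range_eq_top f).2 hf]

theorem localization {K R L : Type*} [CommSemiring K] [CommRing R] [CommRing L] [Algebra K R]
    [Algebra R L] [Algebra K L] [IsScalarTower K R L] (hR : CountablyGenerated K R)
    (M : Submonoid R) [IsLocalization M L] (hM : (M : Set R).Countable) :
    CountablyGenerated K L := by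
  obtain ⟨s, hs, hadj⟩ := hR
  have : Countable M := hM.to_subtype
  have hinv : Algebra.adjoin R (IsLocalization.invSubmonoid M L : Set L) = ⊤ := by
    refine Algebra.eq_top_iff.2 fun x => Algebra.span_le_adjoin R _ ?_
    rw [IsLocalization.span_invSubmonoid M L]
    trivial
  refine ⟨algebraMap R L '' s ∪ IsLocalization.invSubmonoid M L, ?_, ?_⟩
  · exact (hs.image _).union <|
      Set.countable_coe_iff.1 (IsLocalization.toInvSubmonoid_surjective M L).countable
  · rw [Algebra.adjoin_algebraMap_image_union_eq_adjoin_adjoin, hadj, Algebra.adjoin_top, hinv,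
      Subalgebra.restrictScalars_top, Subalgebra.restrictScalars_top]

theorem rank_le_aleph0 {K A : Type*} [CommRing K] [Ring A] [Algebra K A]
    (h : CountablyGenerated K A) : Module.rank K A ≤ ℵ₀ := by
  obtain ⟨s, hs, hadj⟩ := h
  have := Algebra.rank_adjoin_le (R := K) s
  rw [hadj, Subalgebra.rank_top] at this
  exact this.trans (max_le hs.le_aleph0 le_rfl)

theorem nonempty_algHom {K : Type u} {A : Type v} [Field K] [IsAlgClosed K] [CommRing A]
    [Nontrivial A] [Algebra K A] (h : CountablyGenerated K A) (hK : ℵ₀ < #K) :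
    Nonempty (A →ₐ[K] K) := by
  obtain ⟨m, hm⟩ := Ideal.exists_maximal A
  let _ : Field (A ⧸ m) := Ideal.Quotient.field m
  have hrank : Module.rank K (A ⧸ m) ≤ ℵ₀ :=
    ((Ideal.Quotient.mkₐ K m).toLinearMap.rank_le_of_surjective
      (Ideal.Quotient.mkₐ_surjective K m)).trans h.rank_le_aleph0
  have : Algebra.IsAlgebraic K (A ⧸ m) := .of_lift_rank_lt <|
    (lift_le_aleph0.{v, u}.2 hrank).trans_lt (aleph0_lt_lift.{u, v}.2 hK)
  let e : K ≃ₐ[K] A ⧸ m :=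
    .ofBijective (Algebra.ofId K _) IsAlgClosed.algebraMap_bijective_of_isIntegral
  exact ⟨e.symm.toAlgHom.comp (Ideal.Quotient.mkₐ K m)⟩

end Algebra.CountablyGenerated

/-- Every rational map between affine varieties in `ℂ^ℕ` has nonempty domain: if
`X = V(J) ⊆ ℂ^ℕ` with `J` prime (so the coordinate ring `S/J` is a domain) and
`(f_i)_{i ∈ ℕ}` are nonzero elements of the coordinate ring, then there is a point of `X`
at which no `f_i` vanishes (evaluation of a coordinate-ring element at such a point being
given via any polynomial representative). -/
theorem rational_map_dom_nonempty (J : Ideal (MvPolynomial ℕ ℂ)) (hJ : J.IsPrime)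
    (f : ℕ → MvPolynomial ℕ ℂ ⧸ J) (hf : ∀ i, f i ≠ 0) :
    ∃ a : ℕ → ℂ, (∀ g ∈ J, eval a g = 0) ∧
      ∀ i, ∀ g : MvPolynomial ℕ ℂ, Ideal.Quotient.mk J g = f i → eval a g ≠ 0 := by
  let M : Submonoid (MvPolynomial ℕ ℂ ⧸ J) := Submonoid.closure (Set.range f)
  have hM : M ≤ nonZeroDivisors _ := Submonoid.closure_le.2 <|
    Set.range_subset_iff.2 fun i => mem_nonZeroDivisors_of_ne_zero (hf i)
  have : IsDomain (Localization M) := IsLocalization.isDomain_localization hM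
  have hR : Algebra.CountablyGenerated ℂ (MvPolynomial ℕ ℂ ⧸ J) :=
    (Algebra.CountablyGenerated.mvPolynomial ℂ ℕ).of_surjective (Ideal.Quotient.mkₐ ℂ J)
      (Ideal.Quotient.mkₐ_surjective ℂ J)
  have hL : Algebra.CountablyGenerated ℂ (Localization M) :=
    .localization (L := Localization M) hR M (Set.countable_range f).submonoidClosure
  obtain ⟨φ⟩ := Algebra.CountablyGenerated.nonempty_algHom (A := Localization M) hL
    (mk_complex ▸ aleph0_lt_continuum)
  let ψ : MvPolynomial ℕ ℂ →ₐ[ℂ] ℂ :=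
    φ.comp ((IsScalarTower.toAlgHom ℂ _ (Localization M)).comp (Ideal.Quotient.mkₐ ℂ J))
  have hψ (g : MvPolynomial ℕ ℂ) : eval (fun i => ψ (X i)) g = ψ g := by
    rw [← coe_aeval_eq_eval]
    exact DFunLike.congr_fun (aeval_unique ψ).symm g
  refine ⟨fun i => ψ (X i), fun g hg => ?_, fun i g hg => ?_⟩
  · rw [hψ]
    simp [ψ, Ideal.Quotient.eq_zero_iff_mem.2 hg]
  · rw [hψ]
    have hunit : IsUnit (algebraMap _ (Localization M) (f i)) :=
      IsLocalization.map_units (Localization M) (⟨f i, Submonoid.subset_closure ⟨i, rfl⟩⟩ : M)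
    simpa [ψ, hg] using (hunit.map φ).ne_zero
end

section
/- Let R be a commutative Noetherian ring, *R its ultrapower over an ultrafilter, and M a finitely generated R-module. Then the set of associated primes of the *R-module *M equals {p·*R : p ∈ Ass_R(M)}. -/
open Filter

/-!
Over a Noetherian ring a finitely generated module `M` has a uniform exponent `K` such that
`aⁿ • x = 0` implies `aᴷ • x = 0`: this property survives extensions, so a prime filtration of
`M` provides it. Consequently `g ∈ √(0 : w)` in `*M` iff `gᵢ ∈ √(0 : wᵢ)` for `U`-almost all `i`.
Each `√(0 : wᵢ)` is the intersection of the associated primes of `M` containing `(0 : wᵢ)`, and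
there are only finitely many associated primes, so `√(0 : w)` is the intersection of the ideals
`*p = p·*R` of germs eventually in `p`, over the associated primes `p` containing `(0 : wᵢ)` for
almost all `i`. When `√(0 : w)` is prime it must be one of them. Conversely, if `p = √(0 : m)`
then `*p = √(0 : m)` in `*M`.
-/

section

variable {R M : Type*} [CommRing R] [AddCommGroup M] [Module R M]

variable (R M) in
def IsPowTorsionExponent (K : ℕ) : Prop :=
  ∀ (a : R) (x : M) (n : ℕ), a ^ n • x = 0 → a ^ K • x = 0

theorem isPowTorsionExponent_zero_of_subsingleton [Subsingleton M] :
    IsPowTorsionExponent R M 0 :=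
  fun _ _ _ _ => Subsingleton.elim _ _

theorem isPowTorsionExponent_one_of_linearEquiv_quotient {p : Ideal R} [p.IsPrime]
    (e : M ≃ₗ[R] R ⧸ p) : IsPowTorsionExponent R M 1 := by
  intro a x n hx
  apply e.injective
  replace hx : Ideal.Quotient.mk p a ^ n * e x = 0 := by
    simpa [Algebra.smul_def] using congrArg e hx
  simpa [Algebra.smul_def] using (mul_eq_zero.mp hx).imp_left fun h => IsNilpotent.eq_zero ⟨n, h⟩

theorem IsPowTorsionExponent.of_exact {N P : Type*} [AddCommGroup N] [Module R N]
    [AddCommGroup P] [Module R P] {f : N →ₗ[R] M} {g : M →ₗ[R] P}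
    (hf : Function.Injective f) (hfg : Function.Exact f g) {K L : ℕ}
    (hN : IsPowTorsionExponent R N K) (hP : IsPowTorsionExponent R P L) :
    IsPowTorsionExponent R M (K + L) := by
  intro a x n hx
  obtain ⟨y, hy⟩ : ∃ y, f y = a ^ L • x :=
    (hfg _).mp (by rw [map_smul]; exact hP a _ n (by rw [← map_smul, hx, map_zero]))
  have hyn : a ^ n • y = 0 := hf (by rw [map_smul, hy, map_zero, smul_comm, hx, smul_zero])
  rw [pow_add, mul_smul, ← hy, ← map_smul, hN a y n hyn, map_zero]

variable (R M) in
theorem exists_isPowTorsionExponent [IsNoetherianRing R] [Module.Finite R M] :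
    ∃ K, IsPowTorsionExponent R M K := by
  induction ‹Module.Finite R M› using
    IsNoetherianRing.induction_on_isQuotientEquivQuotientPrime R with
  | subsingleton N => exact ⟨0, isPowTorsionExponent_zero_of_subsingleton⟩
  | quotient N p e => exact ⟨1, isPowTorsionExponent_one_of_linearEquiv_quotient (p := p.1) e⟩
  | exact N₁ N₂ N₃ f g hf _ hfg h₁ h₃ =>
    obtain ⟨K, hK⟩ := h₁
    obtain ⟨L, hL⟩ := h₃
    exact ⟨K + L, hK.of_exact hf hfg hL⟩

theorem mem_radical_colon_iff_forall_mem_associatedPrimes [IsNoetherianRing R] {x : M}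
    {a : R} : a ∈ ((⊥ : Submodule R M).colon {x}).radical ↔
      ∀ p ∈ associatedPrimes R M, (⊥ : Submodule R M).colon {x} ≤ p → a ∈ p := by
  refine ⟨fun ⟨n, hn⟩ p hp hle => hp.isPrime.mem_of_pow_mem n (hle hn), fun h => ?_⟩
  rw [← Ideal.sInf_minimalPrimes, Ideal.mem_sInf]
  intro q hq
  obtain ⟨y, hy⟩ := Submodule.exists_eq_colon_of_mem_minimalPrimes hq
  exact h q (isAssociatedPrime_iff.mpr ⟨hq.1.1, y, hy⟩) hq.1.2

end

namespace Ideal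

variable {ι R : Type*} [CommRing R]

def germ (l : Filter ι) (p : Ideal R) : Ideal (Germ l R) where
  carrier := {x | x.LiftPred (· ∈ p)}
  zero_mem' := Germ.liftPred_coe.mpr (.of_forall fun _ => p.zero_mem)
  add_mem' {x y} := Germ.inductionOn₂ x y fun _ _ hf hg =>
    Germ.liftPred_coe.mpr <| (Germ.liftPred_coe.mp hf).and (Germ.liftPred_coe.mp hg) |>.mono
      fun _ h => p.add_mem h.1 h.2
  smul_mem' c x := Germ.inductionOn₂ c x fun f _ hg =>
    Germ.liftPred_coe.mpr <| (Germ.liftPred_coe.mp hg).mono fun _ h => p.mul_mem_left (f _) h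

@[simp]
theorem coe_mem_germ {l : Filter ι} {p : Ideal R} {f : ι → R} :
    (f : Germ l R) ∈ p.germ l ↔ ∀ᶠ i in l, f i ∈ p :=
  Germ.liftPred_coe

theorem IsPrime.germ {p : Ideal R} (hp : p.IsPrime) (U : Ultrafilter ι) :
    (p.germ (U : Filter ι)).IsPrime := by
  refine ⟨fun h => ?_, fun {x y} => Germ.inductionOn₂ x y fun f g hfg => ?_⟩
  · obtain ⟨i, hi⟩ := (coe_mem_germ (f := 1)).mp (h ▸ Submodule.mem_top) |>.exists
    exact hp.ne_top ((eq_top_iff_one p).mpr hi)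
  · rw [← Germ.coe_mul, coe_mem_germ] at hfg
    simpa using Ultrafilter.eventually_or.mp (hfg.mono fun _ h => hp.mem_or_mem h)

theorem map_diag_eq_germ {p : Ideal R} (hp : p.FG) (U : Ultrafilter ι) :
    p.map (diag U R) = p.germ (U : Filter ι) := by
  refine le_antisymm (map_le_iff_le_comap.mpr fun a ha => ?_) fun x => ?_
  · exact coe_mem_germ.mpr (.of_forall fun _ => ha)
  refine Germ.inductionOn x fun g hg => ?_
  obtain ⟨n, v, rfl⟩ := Submodule.fg_iff_exists_fin_generating_family.mp hp
  choose! c hc using fun i (h : g i ∈ span (Set.range v)) => mem_span_range_iff_exists_fun.mp h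
  rw [map_span, ← Set.range_comp, mem_span_range_iff_exists_fun,
    ← Germ.coe_eq.mpr ((coe_mem_germ.mp hg).mono hc)]
  refine ⟨fun j => ((c · j) : Germ (U : Filter ι) R), ?_⟩
  simp only [← Germ.coe_coeRingHom, Function.comp_apply, diag, RingHom.comp_apply, ← map_mul,
    ← map_sum]
  congr 1
  ext i
  simp

end Ideal

section

variable {ι R M : Type*} [CommRing R] [AddCommGroup M] [Module R M]

theorem Filter.Germ.coe_smul_coe_eq_zero_iff {l : Filter ι} {g : ι → R} {w : ι → M} :
    (g : Germ l R) • (w : Germ l M) = 0 ↔ ∀ᶠ i in l, g i • w i = 0 := by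
  rw [← Germ.coe_smul', ← Germ.coe_zero, Germ.coe_eq]
  rfl

theorem coe_mem_radical_colon_coe_iff {K : ℕ} (hK : IsPowTorsionExponent R M K)
    {l : Filter ι} {g : ι → R} {w : ι → M} :
    (g : Germ l R) ∈ ((⊥ : Submodule (Germ l R) (Germ l M)).colon {(w : Germ l M)}).radical ↔
      ∀ᶠ i in l, g i ∈ ((⊥ : Submodule R M).colon {w i}).radical := by
  simp only [Ideal.mem_radical_iff, Submodule.mem_colon_singleton, Submodule.mem_bot,
    ← Germ.coe_pow, Germ.coe_smul_coe_eq_zero_iff, Pi.pow_apply]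
  exact ⟨fun ⟨n, hn⟩ => hn.mono fun _ h => ⟨n, h⟩,
    fun h => ⟨K, h.mono fun _ ⟨n, hn⟩ => hK _ _ n hn⟩⟩

theorem exists_finset_radical_colon_coe_eq_inf_germ [IsNoetherianRing R] [Module.Finite R M]
    (U : Ultrafilter ι) (w : ι → M) :
    ∃ T : Finset (Ideal R), ↑T ⊆ associatedPrimes R M ∧
      ((⊥ : Submodule (Germ (U : Filter ι) R) (Germ (U : Filter ι) M)).colon
        {(w : Germ (U : Filter ι) M)}).radical = T.inf (Ideal.germ (U : Filter ι)) := by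
  obtain ⟨K, hK⟩ := exists_isPowTorsionExponent R M
  have hA := associatedPrimes.finite R M
  let T := {p ∈ associatedPrimes R M | ∀ᶠ i in U, (⊥ : Submodule R M).colon {w i} ≤ p}
  have hT : T.Finite := hA.subset (Set.sep_subset _ _)
  refine ⟨hT.toFinset, by simp [T], ?_⟩
  ext x
  refine Germ.inductionOn x fun g => ?_
  simp only [coe_mem_radical_colon_coe_iff hK, Submodule.mem_finsetInf, Ideal.coe_mem_germ,
    mem_radical_colon_iff_forall_mem_associatedPrimes, eventually_all_finite hA,
    Ultrafilter.eventually_imp, hT.mem_toFinset, T, Set.mem_ofPred_eq, and_imp]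

end

/-- For a commutative Noetherian ring `R`, a finitely generated `R`-module `M`, and the
ultrapowers `*R`, `*M` over an ultrafilter `U`: the associated primes of the `*R`-module
`*M` are exactly the extensions `p·*R` of the associated primes `p` of `M`. -/
theorem ultrapower_associatedPrimes {ι R M : Type*} [CommRing R] [IsNoetherianRing R]
    [AddCommGroup M] [Module R M] [Module.Finite R M] (U : Ultrafilter ι) :
    associatedPrimes (Filter.Germ (U : Filter ι) R) (Filter.Germ (U : Filter ι) M) =
      (Ideal.map (diag U R)) '' associatedPrimes R M := by
  ext P
  constructor
  · rintro ⟨hP, x, rfl⟩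
    induction x using Germ.inductionOn with
    | h w =>
      obtain ⟨T, hTA, hT⟩ := exists_finset_radical_colon_coe_eq_inf_germ (R := R) U w
      obtain ⟨p, hpT, hp⟩ := (hT ▸ hP).inf_le'.mp le_rfl
      refine ⟨p, hTA hpT, ?_⟩
      rw [Ideal.map_diag_eq_germ p.fg_of_isNoetherianRing, hT]
      exact le_antisymm hp (Finset.inf_le hpT)
  · rintro ⟨p, ⟨hp, m, hm⟩, rfl⟩
    rw [Ideal.map_diag_eq_germ p.fg_of_isNoetherianRing]
    obtain ⟨K, hK⟩ := exists_isPowTorsionExponent R M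
    refine ⟨hp.germ U, (fun _ => m : ι → M), ?_⟩
    ext x
    refine Germ.inductionOn x fun g => ?_
    rw [Ideal.coe_mem_germ, coe_mem_radical_colon_coe_iff hK, hm]
end
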